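/- arXiv:2104.14248 — 4 statements merged into one kernel-verified Lean document; each statement's English description precedes it below -/
import Mathlib

section
/- (Combes–Thomas estimate) Let d ≥ 1, let V : ℤ^d → ℝ be bounded, let H = Δ + V on ℓ²(ℤ^d), and let z ∈ ℝ with η := dist(z, spectrum(H)) > 0. Then there exist constants C > 0 and β > 0, depending only on d and η, such that |⟨δ_y, (H − z)^{-1} δ_x⟩| ≤ C exp(−β|x − y|) for all x, y ∈ ℤ^d, where δ_x denotes the standard basis vector of ℓ²(ℤ^d) at the site x. -/
open MeasureTheory
open scoped ENNReal NNReal InnerProductSpace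

noncomputable section

/-- Points of the lattice `ℤ^d`. -/
abbrev ZLat (d : ℕ) := Fin d → ℤ

/-- The Hilbert space `ℓ²(ℤ^d)` of real square-summable sequences. -/
abbrev ell2 (d : ℕ) := lp (fun _ : ZLat d => ℝ) 2

/-- `H` acts as `Δ + V` on `ℓ²(ℤ^d)`: pointwise,
`(Hψ)(x) = Σ_j (ψ(x+e_j) + ψ(x-e_j)) + V(x) ψ(x)`. -/
def IsSchrodingerOp {d : ℕ} (V : ZLat d → ℝ) (H : ell2 d →L[ℝ] ell2 d) : Prop :=
  ∀ (ψ : ell2 d) (x : ZLat d),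
    H ψ x =
      (∑ j : Fin d, (ψ (x + Pi.single j 1) + ψ (x - Pi.single j 1))) + V x * ψ x

/-! ### Auxiliary constructions -/

variable {d : ℕ}

lemma ct_shift_sum_le (ψ : ell2 d) (e : ZLat d) (s : Finset (ZLat d)) :
    ∑ v ∈ s, ‖ψ (v + e)‖ ^ (2:ℝ≥0∞).toReal ≤ ‖ψ‖ ^ (2:ℝ≥0∞).toReal := by
  have := lp.sum_rpow_le_norm_rpow (p := (2:ℝ≥0∞)) (by norm_num) ψ
    (s.map (Equiv.addRight e).toEmbedding)
  simpa [Finset.sum_map] using this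

lemma ct_mulShift_mem (c : ZLat d → ℝ) (e : ZLat d) (M : ℝ) (hc : ∀ v, |c v| ≤ M)
    (ψ : ell2 d) : Memℓp (fun v => c v * ψ (v + e)) 2 := by
  have hM : 0 ≤ M := le_trans (abs_nonneg _) (hc 0)
  refine memℓp_gen' (C := M ^ (2:ℝ≥0∞).toReal * ‖ψ‖ ^ (2:ℝ≥0∞).toReal) (fun s => ?_)
  calc ∑ v ∈ s, ‖c v * ψ (v + e)‖ ^ (2:ℝ≥0∞).toReal
      ≤ ∑ v ∈ s, M ^ (2:ℝ≥0∞).toReal * ‖ψ (v + e)‖ ^ (2:ℝ≥0∞).toReal := by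
        refine Finset.sum_le_sum fun v _ => ?_
        rw [← Real.mul_rpow hM (norm_nonneg _)]
        apply Real.rpow_le_rpow (norm_nonneg _) ?_ (by norm_num)
        rw [norm_mul, Real.norm_eq_abs]
        exact mul_le_mul_of_nonneg_right (hc v) (norm_nonneg _)
    _ = M ^ (2:ℝ≥0∞).toReal * ∑ v ∈ s, ‖ψ (v + e)‖ ^ (2:ℝ≥0∞).toReal := by
        rw [Finset.mul_sum]
    _ ≤ M ^ (2:ℝ≥0∞).toReal * ‖ψ‖ ^ (2:ℝ≥0∞).toReal :=
        mul_le_mul_of_nonneg_left (ct_shift_sum_le ψ e s) (Real.rpow_nonneg hM _)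

/-- The bounded operator `ψ ↦ (v ↦ c v * ψ (v + e))` on `ℓ²(ℤ^d)`. -/
def mulShift (c : ZLat d → ℝ) (e : ZLat d) (M : ℝ) (hc : ∀ v, |c v| ≤ M) :
    ell2 d →L[ℝ] ell2 d :=
  LinearMap.mkContinuous
    { toFun := fun ψ => ⟨fun v => c v * ψ (v + e), ct_mulShift_mem c e M hc ψ⟩
      map_add' := fun ψ φ => by
        apply lp.ext
        funext v
        simp [lp.coeFn_add, mul_add]
        rfl
      map_smul' := fun r ψ => by
        apply lp.ext
        funext v
        simp [lp.coeFn_smul]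
        ring }
    M
    (fun ψ => by
      have hM : 0 ≤ M := le_trans (abs_nonneg _) (hc 0)
      apply lp.norm_le_of_forall_sum_le (by norm_num : (0:ℝ) < (2:ℝ≥0∞).toReal)
        (mul_nonneg hM (norm_nonneg ψ))
      intro s
      rw [Real.mul_rpow hM (norm_nonneg ψ)]
      calc ∑ v ∈ s, ‖c v * ψ (v + e)‖ ^ (2:ℝ≥0∞).toReal
          ≤ ∑ v ∈ s, M ^ (2:ℝ≥0∞).toReal * ‖ψ (v + e)‖ ^ (2:ℝ≥0∞).toReal := by
            refine Finset.sum_le_sum fun v _ => ?_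
            rw [← Real.mul_rpow hM (norm_nonneg _)]
            apply Real.rpow_le_rpow (norm_nonneg _) ?_ (by norm_num)
            rw [norm_mul, Real.norm_eq_abs]
            exact mul_le_mul_of_nonneg_right (hc v) (norm_nonneg _)
        _ = M ^ (2:ℝ≥0∞).toReal * ∑ v ∈ s, ‖ψ (v + e)‖ ^ (2:ℝ≥0∞).toReal := by
            rw [Finset.mul_sum]
        _ ≤ M ^ (2:ℝ≥0∞).toReal * ‖ψ‖ ^ (2:ℝ≥0∞).toReal :=
            mul_le_mul_of_nonneg_left (ct_shift_sum_le ψ e s) (Real.rpow_nonneg hM _))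

@[simp] lemma mulShift_apply (c : ZLat d → ℝ) (e : ZLat d) (M : ℝ)
    (hc : ∀ v, |c v| ≤ M) (ψ : ell2 d) (v : ZLat d) :
    (mulShift c e M hc ψ) v = c v * ψ (v + e) := rfl

lemma mulShift_norm_le (c : ZLat d → ℝ) (e : ZLat d) (M : ℝ)
    (hc : ∀ v, |c v| ≤ M) : ‖mulShift c e M hc‖ ≤ M :=
  LinearMap.mkContinuous_norm_le _ (le_trans (abs_nonneg _) (hc 0)) _

lemma mulShift_congr (c c' : ZLat d → ℝ) (e e' : ZLat d) (M : ℝ)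
    (hc : ∀ v, |c v| ≤ M) (hc' : ∀ v, |c' v| ≤ M) (h1 : c = c') (h2 : e = e') :
    mulShift c e M hc = mulShift c' e' M hc' := by
  subst h1; subst h2; rfl

lemma inner_mulShift (c : ZLat d → ℝ) (e : ZLat d) (M : ℝ) (hc : ∀ v, |c v| ≤ M)
    (hc' : ∀ v, |(fun w => c (w - e)) v| ≤ M) (ψ φ : ell2 d) :
    ⟪mulShift c e M hc ψ, φ⟫_ℝ = ⟪ψ, mulShift (fun w => c (w - e)) (-e) M hc' φ⟫_ℝ := by
  rw [lp.inner_eq_tsum, lp.inner_eq_tsum]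
  simp only [RCLike.inner_apply, starRingEnd_apply, star_trivial, mulShift_apply]
  have := Equiv.tsum_eq (Equiv.addRight e)
    (fun w => c (w - e) * φ (w + -e) * ψ w)
  rw [← this]
  apply tsum_congr
  intro v
  simp only [Equiv.coe_addRight, add_sub_cancel_right, add_neg_cancel_right]
  ring

/-! ### Quadratic form lower bound for symmetric operators -/

section hilbert
variable {E : Type*} [NormedAddCommGroup E] [InnerProductSpace ℝ E] [CompleteSpace E]

omit [CompleteSpace E] in
lemma ct_cs_pos (T : E →L[ℝ] E) (hsym : ∀ x y : E, ⟪T x, y⟫_ℝ = ⟪x, T y⟫_ℝ)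
    (hpos : ∀ x, 0 ≤ ⟪T x, x⟫_ℝ) (x : E) : ‖T x‖ ^ 2 ≤ ‖T‖ * ⟪T x, x⟫_ℝ := by
  have key : ∀ y : E, ⟪T x, y⟫_ℝ ^ 2 ≤ ⟪T x, x⟫_ℝ * ⟪T y, y⟫_ℝ := by
    intro y
    have hquad : ∀ t : ℝ, 0 ≤ ⟪T y, y⟫_ℝ * (t * t) + (2 * ⟪T x, y⟫_ℝ) * t + ⟪T x, x⟫_ℝ := by
      intro t
      have h0 := hpos (x + t • y)
      have hTyx : ⟪T y, x⟫_ℝ = ⟪T x, y⟫_ℝ := by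
        rw [hsym y x, real_inner_comm]
      rw [map_add, ContinuousLinearMap.map_smul] at h0
      rw [inner_add_left, inner_add_right, inner_add_right] at h0
      rw [inner_smul_left, inner_smul_right, inner_smul_left, inner_smul_right] at h0
      simp only [RCLike.ofReal_real_eq_id, id_eq, starRingEnd_apply, star_trivial] at h0
      rw [hTyx] at h0
      nlinarith [h0]
    have hd := discrim_le_zero hquad
    rw [discrim] at hd
    nlinarith [hd]
  have h1 := key (T x)
  have h2 : ⟪T x, T x⟫_ℝ = ‖T x‖ ^ 2 := real_inner_self_eq_norm_sq (T x)
  have h3 : ⟪T (T x), T x⟫_ℝ ≤ ‖T‖ * ‖T x‖ ^ 2 := by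
    calc ⟪T (T x), T x⟫_ℝ ≤ ‖T (T x)‖ * ‖T x‖ := real_inner_le_norm _ _
      _ ≤ (‖T‖ * ‖T x‖) * ‖T x‖ :=
          mul_le_mul_of_nonneg_right (T.le_opNorm _) (norm_nonneg _)
      _ = ‖T‖ * ‖T x‖ ^ 2 := by ring
  rcases eq_or_ne (‖T x‖) 0 with h | h
  · rw [h]
    have : (0:ℝ) ≤ ‖T‖ * ⟪T x, x⟫_ℝ := mul_nonneg (norm_nonneg _) (hpos x)
    simpa using this
  · have hpos2 : 0 < ‖T x‖ ^ 2 := by positivity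
    nlinarith [hpos x, norm_nonneg T, h1, h2, h3]

lemma ct_quad_lb (T : E →L[ℝ] E) (hsym : ∀ x y : E, ⟪T x, y⟫_ℝ = ⟪x, T y⟫_ℝ)
    (hpos : ∀ x, 0 ≤ ⟪T x, x⟫_ℝ) {c : ℝ}
    (hunit : ∀ μ : ℝ, 0 ≤ μ → μ < c → IsUnit (T - μ • (1 : E →L[ℝ] E)))
    (x₀ : E) (hx₀ : ‖x₀‖ = 1) :
    ∀ x : E, c * ‖x‖ ^ 2 ≤ ⟪T x, x⟫_ℝ := by
  set S : Set ℝ := (fun x => ⟪T x, x⟫_ℝ) '' {x : E | ‖x‖ = 1} with hS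
  have hSne : S.Nonempty := ⟨_, ⟨x₀, hx₀, rfl⟩⟩
  have hSbd : BddBelow S := ⟨0, fun s ⟨x, _, hx⟩ => hx ▸ hpos x⟩
  set m := sInf S with hm
  have hm0 : 0 ≤ m := le_csInf hSne (fun s ⟨x, _, hx⟩ => hx ▸ hpos x)
  have hmx : ∀ x : E, m * ‖x‖ ^ 2 ≤ ⟪T x, x⟫_ℝ := by
    intro x
    rcases eq_or_ne x 0 with rfl | hx
    · simp
    · have hnx : (0:ℝ) < ‖x‖ := norm_pos_iff.mpr hx
      have h1 : m ≤ ⟪T (‖x‖⁻¹ • x), ‖x‖⁻¹ • x⟫_ℝ :=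
        csInf_le hSbd ⟨‖x‖⁻¹ • x, by simp [norm_smul, abs_of_pos hnx,
          inv_mul_cancel₀ hnx.ne'], rfl⟩
      rw [ContinuousLinearMap.map_smul, inner_smul_left, inner_smul_right] at h1
      simp only [starRingEnd_apply, star_trivial] at h1
      have h2 : ‖x‖⁻¹ * (‖x‖⁻¹ * ⟪T x, x⟫_ℝ) * ‖x‖ ^ 2 = ⟪T x, x⟫_ℝ := by
        field_simp
      have h3 := mul_le_mul_of_nonneg_right h1 (sq_nonneg ‖x‖)
      rw [h2] at h3
      exact h3
  have hcm : c ≤ m := by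
    by_contra hlt
    push_neg at hlt
    set T' := T - m • (1 : E →L[ℝ] E) with hT'
    have hu : IsUnit T' := hunit m hm0 hlt
    have hT'app : ∀ x : E, T' x = T x - m • x := by
      intro x; simp [hT', ContinuousLinearMap.sub_apply]
    have hsym' : ∀ x y : E, ⟪T' x, y⟫_ℝ = ⟪x, T' y⟫_ℝ := by
      intro x y
      rw [hT'app, hT'app, inner_sub_left, inner_sub_right, hsym,
        inner_smul_left, inner_smul_right]
      simp [starRingEnd_apply]
    have hq' : ∀ x : E, ⟪T' x, x⟫_ℝ = ⟪T x, x⟫_ℝ - m * ‖x‖ ^ 2 := by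
      intro x
      rw [hT'app, inner_sub_left, inner_smul_left]
      simp [starRingEnd_apply, real_inner_self_eq_norm_sq]
    have hpos' : ∀ x : E, 0 ≤ ⟪T' x, x⟫_ℝ := fun x => by
      rw [hq']; linarith [hmx x]
    set K := ‖((hu.unit⁻¹ : (E →L[ℝ] E)ˣ) : E →L[ℝ] E)‖ with hK
    have hKpos : 0 ≤ K := norm_nonneg _
    set δ : ℝ := (K ^ 2 * ‖T'‖ + 1)⁻¹ with hδ
    have hδpos : 0 < δ := by positivity
    obtain ⟨s, ⟨x, hx1, rfl⟩, hs⟩ := Real.lt_sInf_add_pos hSne hδpos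
    have hq'x : ⟪T' x, x⟫_ℝ < δ := by
      rw [hq']; rw [Set.mem_setOf_eq] at hx1; rw [hx1]; simp; linarith [hs]
    have hxT' : ‖x‖ ≤ K * ‖T' x‖ := by
      have hone : ((hu.unit⁻¹ : (E →L[ℝ] E)ˣ) : E →L[ℝ] E) * T' = 1 := by
        simpa using hu.unit.inv_mul
      have : ((hu.unit⁻¹ : (E →L[ℝ] E)ˣ) : E →L[ℝ] E) (T' x) = x := by
        calc ((hu.unit⁻¹ : (E →L[ℝ] E)ˣ) : E →L[ℝ] E) (T' x)
            = (((hu.unit⁻¹ : (E →L[ℝ] E)ˣ) : E →L[ℝ] E) * T') x := rfl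
          _ = x := by rw [hone]; rfl
      calc ‖x‖ = ‖((hu.unit⁻¹ : (E →L[ℝ] E)ˣ) : E →L[ℝ] E) (T' x)‖ := by rw [this]
        _ ≤ K * ‖T' x‖ := ContinuousLinearMap.le_opNorm _ _
    have hcs := ct_cs_pos T' hsym' hpos' x
    rw [Set.mem_setOf_eq] at hx1
    have h1 : 1 ≤ K ^ 2 * ‖T' x‖ ^ 2 := by
      have := mul_le_mul hxT' hxT' (norm_nonneg x) (by positivity)
      rw [hx1] at this
      nlinarith [this]
    have h2 : K ^ 2 * ‖T' x‖ ^ 2 ≤ K ^ 2 * (‖T'‖ * ⟪T' x, x⟫_ℝ) :=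
      mul_le_mul_of_nonneg_left hcs (by positivity)
    have h3 : K ^ 2 * (‖T'‖ * ⟪T' x, x⟫_ℝ) < K ^ 2 * ‖T'‖ * δ + δ := by
      nlinarith [hpos' x, hq'x, norm_nonneg T', sq_nonneg K]
    have h4 : K ^ 2 * ‖T'‖ * δ + δ = 1 := by
      rw [hδ]
      field_simp
    linarith
  intro x
  calc c * ‖x‖ ^ 2 ≤ m * ‖x‖ ^ 2 := by nlinarith [norm_nonneg x]
    _ ≤ ⟪T x, x⟫_ℝ := hmx x

end hilbert

/-! ### Elementary geometric lemmas -/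

lemma ct_norm_single_le_one (j : Fin d) : ‖(Pi.single j (1:ℤ) : ZLat d)‖ ≤ 1 := by
  rw [pi_norm_le_iff_of_nonneg (by norm_num)]
  intro i
  rcases eq_or_ne i j with rfl | h
  · simp
  · simp [Pi.single_apply, h]

lemma ct_g_lip (x : ZLat d) (R : ℝ) (v w : ZLat d) (hvw : ‖v - w‖ ≤ 1) :
    |min ‖v - x‖ R - min ‖w - x‖ R| ≤ 1 := by
  refine (abs_min_sub_min_le_max _ _ _ _).trans (max_le ?_ (by simp))
  refine (abs_norm_sub_norm_le _ _).trans ?_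
  have : v - x - (w - x) = v - w := by abel
  rw [this]; exact hvw

lemma ct_exp_coeff_bound {β s : ℝ} (hβ : 0 < β) (hs : |s| ≤ 1) :
    |Real.exp (β * s) - 1| ≤ Real.exp β - 1 := by
  rcases abs_le.mp hs with ⟨h1, h2⟩
  have hub : Real.exp (β * s) ≤ Real.exp β := by
    apply Real.exp_le_exp.mpr; nlinarith
  have hlb : Real.exp (-β) ≤ Real.exp (β * s) := by
    apply Real.exp_le_exp.mpr; nlinarith
  have ha : 1 ≤ Real.exp β := Real.one_le_exp hβ.le
  have hinv : Real.exp (-β) = (Real.exp β)⁻¹ := Real.exp_neg β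
  have hmul : Real.exp β * (Real.exp β)⁻¹ = 1 :=
    mul_inv_cancel₀ (Real.exp_pos β).ne'
  rw [abs_le]
  constructor <;> nlinarith

/-! ### Main theorem -/

set_option maxHeartbeats 2000000 in
set_option synthInstance.maxHeartbeats 400000 in
/-- **Combes–Thomas estimate**: off the spectrum, the Green function
`(H - z)^{-1}(x,y) = ⟨δ_y, (H - z)^{-1} δ_x⟩` decays exponentially, with constants
depending only on the dimension `d` and the distance `η` from `z` to the spectrum. -/
theorem combes_thomas
    (d : ℕ) (hd : 1 ≤ d) (η : ℝ) (hη : 0 < η) :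
    ∃ C β : ℝ, 0 < C ∧ 0 < β ∧
      ∀ (V : ZLat d → ℝ), (∃ K : ℝ, ∀ x, |V x| ≤ K) →
        ∀ (H : ell2 d →L[ℝ] ell2 d), IsSchrodingerOp V H →
          ∀ z : ℝ, Metric.infDist z (spectrum ℝ H) = η →
            ∀ x y : ZLat d,
              |(Ring.inverse (H - z • (1 : ell2 d →L[ℝ] ell2 d))
                  (lp.single 2 x (1 : ℝ))) y|
                ≤ C * Real.exp (-β * ‖x - y‖) := by
  -- constants
  have hd1 : (1:ℝ) ≤ (d:ℝ) := by exact_mod_cast hd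
  have hd0 : (0:ℝ) < 4 * d := by linarith
  set β := Real.log (1 + η / (4 * d)) with hβdef
  have harg : (1:ℝ) < 1 + η / (4 * d) := by
    have : 0 < η / (4 * d) := div_pos hη hd0
    linarith
  have hβpos : 0 < β := Real.log_pos harg
  have hexpβ : Real.exp β = 1 + η / (4 * d) := Real.exp_log (by linarith)
  set ε := Real.exp β - 1 with hεdef
  have hε : ε = η / (4 * d) := by rw [hεdef, hexpβ]; ring
  have hεpos : 0 < ε := by rw [hε]; exact div_pos hη hd0
  refine ⟨2 / η, β, by positivity, hβpos, ?_⟩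
  rintro V ⟨K, hK⟩ H hH z hz x y
  have hK0 : 0 ≤ K := le_trans (abs_nonneg _) (hK 0)
  -- lattice unit vectors
  set e : Fin d → ZLat d := fun j => Pi.single j 1 with he
  -- weight functions
  set R := ‖x - y‖ with hR
  have hR0 : 0 ≤ R := norm_nonneg _
  set g : ZLat d → ℝ := fun v => min ‖v - x‖ R with hg
  have hg0 : ∀ v, 0 ≤ g v := fun v => le_min (norm_nonneg _) hR0
  have hgR : ∀ v, g v ≤ R := fun v => min_le_right _ _
  set u : ZLat d → ℝ := fun v => Real.exp (β * g v) with hu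
  set uInv : ZLat d → ℝ := fun v => Real.exp (-(β * g v)) with huInv
  have huMul : ∀ v, u v * uInv v = 1 := by
    intro v; rw [hu, huInv]; rw [← Real.exp_add]; simp
  have hu_bd : ∀ v, |u v| ≤ Real.exp (β * R) := by
    intro v
    rw [abs_of_pos (Real.exp_pos _)]
    apply Real.exp_le_exp.mpr
    exact mul_le_mul_of_nonneg_left (hgR v) hβpos.le
  have huInv_bd : ∀ v, |uInv v| ≤ 1 := by
    intro v
    rw [abs_of_pos (Real.exp_pos _)]
    rw [show (1:ℝ) = Real.exp 0 by simp]
    apply Real.exp_le_exp.mpr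
    have := mul_nonneg hβpos.le (hg0 v)
    linarith
  -- multiplication operators
  set Mu := mulShift u 0 (Real.exp (β * R)) hu_bd with hMu
  set Mv := mulShift uInv 0 1 huInv_bd with hMv
  -- hopping coefficients
  set cf : ZLat d → ZLat d → ℝ := fun e' v => u v * uInv (v + e') - 1 with hcf
  have hcf_bd : ∀ e' : ZLat d, ‖e'‖ ≤ 1 → ∀ v, |cf e' v| ≤ ε := by
    intro e' he' v
    have hexp : u v * uInv (v + e') = Real.exp (β * (g v - g (v + e'))) := by
      rw [hu, huInv, ← Real.exp_add]
      congr 1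
      ring
    have hlip : |g v - g (v + e')| ≤ 1 := by
      rw [hg]
      apply ct_g_lip x R v (v + e')
      have hve : v - (v + e') = -e' := by abel
      rw [hve, norm_neg]
      exact he'
    rw [hcf, hεdef]
    simp only []
    rw [hexp]
    exact ct_exp_coeff_bound hβpos hlip
  have hcbp : ∀ j : Fin d, ∀ v, |cf (e j) v| ≤ ε := fun j =>
    hcf_bd (e j) (ct_norm_single_le_one j)
  have hcbm : ∀ j : Fin d, ∀ v, |cf (-(e j)) v| ≤ ε := fun j =>
    hcf_bd (-(e j)) (by rw [norm_neg]; exact ct_norm_single_le_one j)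
  -- perturbation operator
  set B : ell2 d →L[ℝ] ell2 d :=
    ∑ j : Fin d, (mulShift (cf (e j)) (e j) ε (hcbp j)
      + mulShift (cf (-(e j))) (-(e j)) ε (hcbm j)) with hB
  have hBnorm : ‖B‖ ≤ η / 2 := by
    calc ‖B‖ ≤ ∑ j : Fin d, ‖mulShift (cf (e j)) (e j) ε (hcbp j)
        + mulShift (cf (-(e j))) (-(e j)) ε (hcbm j)‖ := norm_sum_le _ _
      _ ≤ ∑ _j : Fin d, (ε + ε) := by
          refine Finset.sum_le_sum fun j _ => ?_
          exact (norm_add_le _ _).trans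
            (add_le_add (mulShift_norm_le _ _ _ _) (mulShift_norm_le _ _ _ _))
      _ = (d:ℝ) * (ε + ε) := by
          rw [Finset.sum_const, Finset.card_univ, Fintype.card_fin, nsmul_eq_mul]
      _ = η / 2 := by
          rw [hε]
          field_simp
          ring
  -- spectral facts
  have hspec_unit : ∀ w : ℝ, |z - w| < η →
      IsUnit (H - w • (1 : ell2 d →L[ℝ] ell2 d)) := by
    intro w hw
    have hnotmem : w ∉ spectrum ℝ H := by
      intro hmem
      have h1 := Metric.infDist_le_dist_of_mem (x := z) hmem
      rw [hz, Real.dist_eq] at h1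
      linarith [hw]
    have h2 := spectrum.notMem_iff.mp hnotmem
    have h3 : H - w • (1 : ell2 d →L[ℝ] ell2 d)
        = -(algebraMap ℝ (ell2 d →L[ℝ] ell2 d) w - H) := by
      rw [Algebra.algebraMap_eq_smul_one, neg_sub]
    rw [h3]
    exact h2.neg
  set A := H - z • (1 : ell2 d →L[ℝ] ell2 d) with hA
  have hAunit : IsUnit A := hspec_unit z (by simpa using hη)
  -- symmetry of H
  have hone1 : ∀ v : ZLat d, |(fun _ : ZLat d => (1:ℝ)) v| ≤ 1 := fun v => by norm_num
  set Sp : Fin d → (ell2 d →L[ℝ] ell2 d) :=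
    fun j => mulShift (fun _ => (1:ℝ)) (e j) 1 hone1 with hSp
  set Sm : Fin d → (ell2 d →L[ℝ] ell2 d) :=
    fun j => mulShift (fun _ => (1:ℝ)) (-(e j)) 1 hone1 with hSm
  set MV : ell2 d →L[ℝ] ell2 d := mulShift V 0 K hK with hMV
  have H_eq : H = (∑ j : Fin d, (Sp j + Sm j)) + MV := by
    apply ContinuousLinearMap.ext
    intro ψ
    apply lp.ext
    funext v
    rw [hH ψ v]
    simp only [ContinuousLinearMap.add_apply, ContinuousLinearMap.sum_apply,
      lp.coeFn_add, Pi.add_apply, hSp, hSm, hMV, mulShift_apply, one_mul, add_zero]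
    rw [lp.coeFn_sum]
    rw [Finset.sum_apply]
    simp only [lp.coeFn_add, Pi.add_apply, mulShift_apply, one_mul, sub_eq_add_neg]
    rfl
  have Hsym : ∀ φ ψ : ell2 d, ⟪H φ, ψ⟫_ℝ = ⟪φ, H ψ⟫_ℝ := by
    intro φ ψ
    rw [H_eq]
    simp only [ContinuousLinearMap.add_apply, ContinuousLinearMap.sum_apply]
    rw [inner_add_left, inner_add_right, sum_inner, inner_sum]
    congr 1
    · apply Finset.sum_congr rfl
      intro j _
      simp only [hSp, hSm]
      rw [inner_add_left, inner_add_right]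
      have hadj1 : ⟪mulShift (fun _ => (1:ℝ)) (e j) 1 hone1 φ, ψ⟫_ℝ
          = ⟪φ, mulShift (fun _ => (1:ℝ)) (-(e j)) 1 hone1 ψ⟫_ℝ := by
        rw [inner_mulShift (fun _ => (1:ℝ)) (e j) 1 hone1 hone1 φ ψ]
      have hcongr : mulShift (fun w : ZLat d => (1:ℝ)) (-(-(e j))) 1 hone1
          = mulShift (fun _ : ZLat d => (1:ℝ)) (e j) 1 hone1 :=
        mulShift_congr _ _ _ _ _ _ _ rfl (neg_neg _)
      have hadj2 : ⟪mulShift (fun _ => (1:ℝ)) (-(e j)) 1 hone1 φ, ψ⟫_ℝ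
          = ⟪φ, mulShift (fun _ => (1:ℝ)) (e j) 1 hone1 ψ⟫_ℝ := by
        rw [inner_mulShift (fun _ => (1:ℝ)) (-(e j)) 1 hone1 hone1 φ ψ, hcongr]
      rw [hadj1, hadj2, add_comm]
    · have hK' : ∀ v : ZLat d, |(fun w : ZLat d => V (w - 0)) v| ≤ K := fun v => by
        simp only [sub_zero]; exact hK v
      have hcongr : mulShift (fun w : ZLat d => V (w - 0)) (-0) K hK'
          = mulShift V 0 K hK :=
        mulShift_congr _ _ _ _ _ _ _ (by funext w; rw [sub_zero]) neg_zero
      simp only [hMV]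
      rw [inner_mulShift V 0 K hK hK' φ ψ, hcongr]
  have hAsym : ∀ φ ψ : ell2 d, ⟪A φ, ψ⟫_ℝ = ⟪φ, A ψ⟫_ℝ := by
    intro φ ψ
    rw [hA]
    simp only [ContinuousLinearMap.sub_apply, ContinuousLinearMap.smul_apply,
      ContinuousLinearMap.one_apply]
    rw [inner_sub_left, inner_sub_right, real_inner_smul_left, real_inner_smul_right,
      Hsym]
  -- lower bound on ‖A φ‖
  set T := A * A with hT
  have hTapp : ∀ φ, T φ = A (A φ) := fun φ => rfl
  have hTsym : ∀ φ ψ : ell2 d, ⟪T φ, ψ⟫_ℝ = ⟪φ, T ψ⟫_ℝ := by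
    intro φ ψ
    rw [hTapp, hTapp, hAsym, hAsym]
  have hTq : ∀ φ : ell2 d, ⟪T φ, φ⟫_ℝ = ‖A φ‖ ^ 2 := by
    intro φ
    rw [hTapp, hAsym, real_inner_self_eq_norm_sq]
  have hTunit : ∀ μ : ℝ, 0 ≤ μ → μ < η ^ 2 →
      IsUnit (T - μ • (1 : ell2 d →L[ℝ] ell2 d)) := by
    intro μ hμ0 hμ
    set s := Real.sqrt μ with hs
    have hs0 : 0 ≤ s := Real.sqrt_nonneg μ
    have hs2 : s * s = μ := Real.mul_self_sqrt hμ0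
    have hsη : s < η := by nlinarith
    have h1 : IsUnit (H - (z + s) • (1 : ell2 d →L[ℝ] ell2 d)) := by
      apply hspec_unit
      rw [show z - (z + s) = -s by ring, abs_neg, abs_of_nonneg hs0]
      exact hsη
    have h2 : IsUnit (H - (z - s) • (1 : ell2 d →L[ℝ] ell2 d)) := by
      apply hspec_unit
      rw [show z - (z - s) = s by ring, abs_of_nonneg hs0]
      exact hsη
    have h3 : (H - (z + s) • (1 : ell2 d →L[ℝ] ell2 d))
        * (H - (z - s) • (1 : ell2 d →L[ℝ] ell2 d))
        = T - μ • (1 : ell2 d →L[ℝ] ell2 d) := by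
      rw [hT, hA]
      simp only [mul_sub, sub_mul, smul_mul_assoc, mul_smul_comm, mul_one, one_mul,
        smul_smul]
      match_scalars <;> nlinarith [hs2]
    rw [← h3]
    exact h1.mul h2
  have hlow : ∀ φ : ell2 d, η * ‖φ‖ ≤ ‖A φ‖ := by
    have hq := ct_quad_lb T hTsym (fun φ => by rw [hTq]; exact sq_nonneg _) hTunit
      (lp.single 2 (0 : ZLat d) (1:ℝ))
      (by
        have hns := lp.norm_single (E := fun _ : ZLat d => ℝ) (p := (2:ℝ≥0∞))
          (by norm_num) 0 (1:ℝ)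
        simpa using hns)
    intro φ
    have h1 := hq φ
    rw [hTq] at h1
    nlinarith [norm_nonneg (A φ), norm_nonneg φ, mul_nonneg hη.le (norm_nonneg φ)]
  have hAinv_norm : ‖((hAunit.unit⁻¹ : (ell2 d →L[ℝ] ell2 d)ˣ)
      : ell2 d →L[ℝ] ell2 d)‖ ≤ η⁻¹ := by
    apply ContinuousLinearMap.opNorm_le_bound _ (inv_nonneg.mpr hη.le)
    intro ψ
    have hmulinv : A * ((hAunit.unit⁻¹ : (ell2 d →L[ℝ] ell2 d)ˣ)
        : ell2 d →L[ℝ] ell2 d) = 1 := by simpa using hAunit.unit.mul_inv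
    have h1 : A (((hAunit.unit⁻¹ : (ell2 d →L[ℝ] ell2 d)ˣ)
        : ell2 d →L[ℝ] ell2 d) ψ) = ψ := by
      calc A (((hAunit.unit⁻¹ : (ell2 d →L[ℝ] ell2 d)ˣ) : ell2 d →L[ℝ] ell2 d) ψ)
          = (A * ((hAunit.unit⁻¹ : (ell2 d →L[ℝ] ell2 d)ˣ)
            : ell2 d →L[ℝ] ell2 d)) ψ := rfl
        _ = ψ := by rw [hmulinv]; rfl
    have h2 := hlow (((hAunit.unit⁻¹ : (ell2 d →L[ℝ] ell2 d)ˣ)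
      : ell2 d →L[ℝ] ell2 d) ψ)
    rw [h1] at h2
    rw [show η⁻¹ * ‖ψ‖ = ‖ψ‖ / η by ring, le_div_iff₀ hη]
    linarith
  -- Neumann series
  set t : ell2 d →L[ℝ] ell2 d :=
    -(((hAunit.unit⁻¹ : (ell2 d →L[ℝ] ell2 d)ˣ) : ell2 d →L[ℝ] ell2 d) * B) with ht
  have htnorm : ‖t‖ ≤ 1 / 2 := by
    rw [ht, norm_neg]
    calc ‖((hAunit.unit⁻¹ : (ell2 d →L[ℝ] ell2 d)ˣ) : ell2 d →L[ℝ] ell2 d) * B‖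
        ≤ ‖((hAunit.unit⁻¹ : (ell2 d →L[ℝ] ell2 d)ˣ) : ell2 d →L[ℝ] ell2 d)‖ * ‖B‖ :=
          norm_mul_le _ _
      _ ≤ η⁻¹ * (η / 2) := mul_le_mul hAinv_norm hBnorm (norm_nonneg _)
          (inv_nonneg.mpr hη.le)
      _ = 1 / 2 := by field_simp
  have htlt : ‖t‖ < 1 := lt_of_le_of_lt htnorm (by norm_num)
  set u1 : (ell2 d →L[ℝ] ell2 d)ˣ := Units.oneSub t htlt with hu1
  have hu1inv_norm : ‖((u1⁻¹ : (ell2 d →L[ℝ] ell2 d)ˣ) : ell2 d →L[ℝ] ell2 d)‖ ≤ 2 := by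
    have hval : ((u1⁻¹ : (ell2 d →L[ℝ] ell2 d)ˣ) : ell2 d →L[ℝ] ell2 d)
        = ∑' n : ℕ, t ^ n := rfl
    rw [hval]
    have hgs : HasSum (fun n : ℕ => (1/2 : ℝ) ^ n) 2 := by
      have h := hasSum_geometric_of_lt_one (by norm_num : (0:ℝ) ≤ 1/2)
        (by norm_num : (1/2:ℝ) < 1)
      norm_num at h
      exact h
    refine tsum_of_norm_bounded hgs ?_
    intro n
    cases n with
    | zero =>
        rw [pow_zero, pow_zero]
        show ‖(1 : ell2 d →L[ℝ] ell2 d)‖ ≤ 1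
        rw [ContinuousLinearMap.one_def]
        exact ContinuousLinearMap.norm_id_le
    | succ n =>
        calc ‖t ^ (n+1)‖ ≤ ‖t‖ ^ (n+1) := norm_pow_le' t n.succ_pos
          _ ≤ (1/2) ^ (n+1) := pow_le_pow_left₀ (norm_nonneg t) htnorm _
  set uC : (ell2 d →L[ℝ] ell2 d)ˣ := hAunit.unit * u1 with huC
  have hCval : (uC : ell2 d →L[ℝ] ell2 d) = A + B := by
    have hAt : A * (((hAunit.unit⁻¹ : (ell2 d →L[ℝ] ell2 d)ˣ)
        : ell2 d →L[ℝ] ell2 d) * B) = B := by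
      rw [← mul_assoc, show A * ((hAunit.unit⁻¹ : (ell2 d →L[ℝ] ell2 d)ˣ)
        : ell2 d →L[ℝ] ell2 d) = 1 from by simpa using hAunit.unit.mul_inv, one_mul]
    calc (uC : ell2 d →L[ℝ] ell2 d) = A * (1 - t) := by
          rw [huC, Units.val_mul, hAunit.unit_spec, hu1, Units.val_oneSub]
      _ = A + B := by rw [ht, mul_sub, mul_one, mul_neg, hAt, sub_neg_eq_add]
  have hCinv_norm : ‖((uC⁻¹ : (ell2 d →L[ℝ] ell2 d)ˣ) : ell2 d →L[ℝ] ell2 d)‖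
      ≤ 2 * η⁻¹ := by
    rw [huC, mul_inv_rev, Units.val_mul]
    exact le_trans (norm_mul_le _ _)
      (mul_le_mul hu1inv_norm hAinv_norm (norm_nonneg _) (by norm_num))
  -- the multiplication operators are units
  have hMuMv : Mu * Mv = 1 := by
    apply ContinuousLinearMap.ext
    intro ψ
    apply lp.ext
    funext v
    simp only [ContinuousLinearMap.mul_apply, ContinuousLinearMap.one_apply,
      hMu, hMv, mulShift_apply, add_zero]
    rw [← mul_assoc, huMul v, one_mul]
  have hMvMu : Mv * Mu = 1 := by
    apply ContinuousLinearMap.ext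
    intro ψ
    apply lp.ext
    funext v
    simp only [ContinuousLinearMap.mul_apply, ContinuousLinearMap.one_apply,
      hMu, hMv, mulShift_apply, add_zero]
    rw [← mul_assoc, mul_comm (uInv v) (u v), huMul v, one_mul]
  set uM : (ell2 d →L[ℝ] ell2 d)ˣ := ⟨Mu, Mv, hMuMv, hMvMu⟩ with huM
  -- conjugation identity
  have hconj : Mu * A * Mv = A + B := by
    apply ContinuousLinearMap.ext
    intro ψ
    apply lp.ext
    funext v
    have hMvψ : ∀ w, (Mv ψ) w = uInv w * ψ w := fun w => by
      rw [hMv, mulShift_apply, add_zero]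
    have hAφ : ∀ (φ : ell2 d) (w : ZLat d), (A φ) w
        = (∑ j : Fin d, (φ (w + e j) + φ (w - e j))) + V w * φ w - z * φ w := by
      intro φ w
      have h1 : (A φ) w = (H φ) w - z * φ w := by
        rw [hA]
        simp only [ContinuousLinearMap.sub_apply, ContinuousLinearMap.smul_apply,
          ContinuousLinearMap.one_apply, lp.coeFn_sub, Pi.sub_apply,
          lp.coeFn_smul, Pi.smul_apply, smul_eq_mul]
      rw [h1, hH φ w, he]
    have hBψ : (B ψ) v = ∑ j : Fin d,
        (cf (e j) v * ψ (v + e j) + cf (-(e j)) v * ψ (v + -(e j))) := by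
      rw [hB]
      rw [ContinuousLinearMap.sum_apply, lp.coeFn_sum, Finset.sum_apply]
      apply Finset.sum_congr rfl
      intro j _
      rw [ContinuousLinearMap.add_apply, lp.coeFn_add, Pi.add_apply,
        mulShift_apply, mulShift_apply]
    have hLHS : ((Mu * A * Mv) ψ) v = u v * ((A (Mv ψ)) v) := by
      rw [ContinuousLinearMap.mul_apply, ContinuousLinearMap.mul_apply,
        hMu, mulShift_apply, add_zero]
    rw [ContinuousLinearMap.add_apply, lp.coeFn_add, Pi.add_apply, hLHS, hBψ,
      hAφ (Mv ψ) v, hAφ ψ v]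
    simp only [hMvψ]
    -- now pure algebra
    have huv := huMul v
    have hVterm : u v * (V v * (uInv v * ψ v)) = V v * ψ v := by
      have : u v * (V v * (uInv v * ψ v)) = V v * ((u v * uInv v) * ψ v) := by ring
      rw [this, huv, one_mul]
    have hzterm : u v * (z * (uInv v * ψ v)) = z * ψ v := by
      have : u v * (z * (uInv v * ψ v)) = z * ((u v * uInv v) * ψ v) := by ring
      rw [this, huv, one_mul]
    rw [mul_sub, mul_add, Finset.mul_sum, hVterm, hzterm]
    have hkey : ∑ j : Fin d, u v * (uInv (v + e j) * ψ (v + e j)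
          + uInv (v - e j) * ψ (v - e j))
        = (∑ j : Fin d, (ψ (v + e j) + ψ (v - e j)))
          + ∑ j : Fin d, (cf (e j) v * ψ (v + e j)
            + cf (-(e j)) v * ψ (v + -(e j))) := by
      rw [← Finset.sum_add_distrib]
      apply Finset.sum_congr rfl
      intro j _
      rw [hcf]
      simp only [sub_eq_add_neg]
      ring
    rw [hkey]
    ring
  -- assemble the inverse
  have hAval : A = ((uM⁻¹ * uC * uM : (ell2 d →L[ℝ] ell2 d)ˣ)
      : ell2 d →L[ℝ] ell2 d) := by
    have h1 : ((uM⁻¹ * uC * uM : (ell2 d →L[ℝ] ell2 d)ˣ) : ell2 d →L[ℝ] ell2 d)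
        = Mv * (uC : ell2 d →L[ℝ] ell2 d) * Mu := by
      rw [Units.val_mul, Units.val_mul]
      rfl
    rw [h1, hCval, ← hconj]
    rw [← mul_assoc, ← mul_assoc, hMvMu, one_mul, mul_assoc, hMvMu, mul_one]
  have hUeq : hAunit.unit = uM⁻¹ * uC * uM := Units.ext (by
    rw [hAunit.unit_spec]; exact hAval)
  have hRinv : Ring.inverse A
      = Mv * ((uC⁻¹ : (ell2 d →L[ℝ] ell2 d)ˣ) : ell2 d →L[ℝ] ell2 d) * Mu := by
    rw [← hAunit.unit_spec, Ring.inverse_unit, hUeq]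
    rw [mul_inv_rev, mul_inv_rev, inv_inv]
    rw [Units.val_mul, Units.val_mul]
    rw [show ((uM⁻¹ : (ell2 d →L[ℝ] ell2 d)ˣ) : ell2 d →L[ℝ] ell2 d) = Mv from rfl,
      show ((uM : (ell2 d →L[ℝ] ell2 d)ˣ) : ell2 d →L[ℝ] ell2 d) = Mu from rfl]
    rw [mul_assoc]
  -- evaluate
  have hMuδ : Mu (lp.single 2 x (1:ℝ)) = lp.single 2 x (1:ℝ) := by
    apply lp.ext
    funext v
    rw [hMu, mulShift_apply, add_zero]
    rcases eq_or_ne v x with rfl | hvx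
    · have hgx : g v = 0 := by
        rw [hg]
        simp [min_eq_left hR0]
      have hux : u v = 1 := by rw [hu]; simp [hgx]
      rw [hux, one_mul]
    · rw [lp.single_apply_ne (E := fun _ : ZLat d => ℝ) 2 x (1:ℝ) hvx, mul_zero]
  have happ : Ring.inverse A (lp.single 2 x (1:ℝ))
      = Mv (((uC⁻¹ : (ell2 d →L[ℝ] ell2 d)ˣ) : ell2 d →L[ℝ] ell2 d)
        (lp.single 2 x (1:ℝ))) := by
    rw [hRinv]
    rw [ContinuousLinearMap.mul_apply, ContinuousLinearMap.mul_apply, hMuδ]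
  set w : ell2 d := ((uC⁻¹ : (ell2 d →L[ℝ] ell2 d)ˣ) : ell2 d →L[ℝ] ell2 d)
    (lp.single 2 x (1:ℝ)) with hw
  have hwy : |w y| ≤ 2 * η⁻¹ := by
    have h1 : |w y| ≤ ‖w‖ := by
      have := lp.norm_apply_le_norm (by norm_num : (2:ℝ≥0∞) ≠ 0) w y
      simpa using this
    have h2 : ‖w‖ ≤ 2 * η⁻¹ := by
      have h3 : ‖(lp.single 2 x (1:ℝ) : ell2 d)‖ = 1 := by
        have hns := lp.norm_single (E := fun _ : ZLat d => ℝ) (p := (2:ℝ≥0∞))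
          (by norm_num) x (1:ℝ)
        simpa using hns
      calc ‖w‖ ≤ ‖((uC⁻¹ : (ell2 d →L[ℝ] ell2 d)ˣ) : ell2 d →L[ℝ] ell2 d)‖
            * ‖(lp.single 2 x (1:ℝ) : ell2 d)‖ := ContinuousLinearMap.le_opNorm _ _
        _ ≤ 2 * η⁻¹ * 1 := by
            rw [h3]
            exact mul_le_mul_of_nonneg_right hCinv_norm (by norm_num)
        _ = 2 * η⁻¹ := mul_one _
    exact h1.trans h2
  have hgy : g y = ‖x - y‖ := by
    rw [hg]
    simp only []
    rw [norm_sub_rev, ← hR, min_self]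
  rw [happ]
  have hMvw : (Mv w) y = uInv y * w y := by rw [hMv, mulShift_apply, add_zero]
  rw [hMvw, abs_mul]
  have huy : |uInv y| = Real.exp (-β * ‖x - y‖) := by
    rw [huInv]
    simp only []
    rw [abs_of_pos (Real.exp_pos _), hgy]
    congr 1
    ring
  rw [huy]
  calc Real.exp (-β * ‖x - y‖) * |w y|
      ≤ Real.exp (-β * ‖x - y‖) * (2 * η⁻¹) :=
        mul_le_mul_of_nonneg_left hwy (Real.exp_nonneg _)
    _ = 2 / η * Real.exp (-β * ‖x - y‖) := by
        rw [div_eq_mul_inv]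
        ring


end
end

section
/- Let d ≥ 1, 0 < ε ≤ 1/2, and δ > 0 with 4dε ≤ δ. Let V : ℤ^d → ℝ be arbitrary, set H = ε²Δ + V, let Λ ⊂ ℤ^d be any box, and let E ∈ ℝ satisfy dist(spectrum(H_Λ), E) ≥ δ. Then the Green function G_Λ(E) = (H_Λ − E)^{-1} satisfies |G_Λ(E)(x,y)| ≤ 4 δ^{-1} ε^{|x−y|} for all x, y ∈ Λ. -/
open MeasureTheory

noncomputable section

/-- `Λ` is a box of scale `L`: a rectangle `{y : -m_j ≤ y_j - x_j ≤ M_j}` with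
`m_j, M_j ≥ 0` and `max(m_j, M_j) = L` for each `j`. -/
def IsBoxScale {d : ℕ} (L : ℤ) (Λ : Finset (ZLat d)) : Prop :=
  ∃ x m M : ZLat d, (∀ j, 0 ≤ m j ∧ 0 ≤ M j ∧ max (m j) (M j) = L) ∧
    ∀ y : ZLat d, y ∈ Λ ↔ ∀ j, -(m j) ≤ y j - x j ∧ y j - x j ≤ M j

/-- `Λ` is a (finite) box. -/
def IsBox {d : ℕ} (Λ : Finset (ZLat d)) : Prop := ∃ L : ℤ, IsBoxScale L Λ

open scoped Classical in
/-- The finite-volume restriction `H_Λ = P_Λ (ε²Δ + V) P_Λ` with Dirichlet boundary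
conditions, as a matrix indexed by the sites of `Λ`. -/
def latticeMatrix {d : ℕ} (ε : ℝ) (V : ZLat d → ℝ) (Λ : Finset (ZLat d)) :
    Matrix Λ Λ ℝ := fun x y =>
  ε ^ 2 * (if ∃ j : Fin d, (y : ZLat d) = (x : ZLat d) + Pi.single j 1 ∨
      (y : ZLat d) = (x : ZLat d) - Pi.single j 1 then 1 else 0)
    + (if x = y then V x else 0)

/-- The Green function `G_Λ(E) = (H_Λ - E)^{-1}` of `H = ε²Δ + V` on the box `Λ`. -/
def greenFn {d : ℕ} (ε : ℝ) (V : ZLat d → ℝ) (Λ : Finset (ZLat d)) (E : ℝ) :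
    Matrix Λ Λ ℝ :=
  (latticeMatrix ε V Λ - E • (1 : Matrix Λ Λ ℝ))⁻¹

namespace GFISAux

set_option linter.unusedSectionVars false
set_option linter.unusedVariables false

open Matrix Finset

variable {n : Type*} [Fintype n] [DecidableEq n]

def Nrm (v : n → ℝ) : ℝ := Real.sqrt (∑ i, v i ^ 2)

lemma sum_sq_nonneg (v : n → ℝ) : 0 ≤ ∑ i, v i ^ 2 :=
  Finset.sum_nonneg fun i _ => sq_nonneg _

lemma Nrm_nonneg (v : n → ℝ) : 0 ≤ Nrm v := Real.sqrt_nonneg _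

lemma sq_Nrm (v : n → ℝ) : Nrm v ^ 2 = ∑ i, v i ^ 2 :=
  Real.sq_sqrt (sum_sq_nonneg v)

lemma abs_le_Nrm (v : n → ℝ) (i : n) : |v i| ≤ Nrm v := by
  rw [Nrm, ← Real.sqrt_sq_eq_abs]
  exact Real.sqrt_le_sqrt (Finset.single_le_sum (fun j _ => sq_nonneg (v j)) (Finset.mem_univ i))

lemma Nrm_eq_norm (v : n → ℝ) : Nrm v = ‖(WithLp.equiv 2 (n → ℝ)).symm v‖ := by
  rw [EuclideanSpace.norm_eq]
  unfold Nrm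
  congr 1
  refine Finset.sum_congr rfl fun i _ => ?_
  rw [show ((WithLp.equiv 2 (n → ℝ)).symm v) i = v i from rfl, Real.norm_eq_abs, sq_abs]

lemma Nrm_add_le (v w : n → ℝ) : Nrm (v + w) ≤ Nrm v + Nrm w := by
  rw [Nrm_eq_norm, Nrm_eq_norm, Nrm_eq_norm]
  exact norm_add_le _ _

lemma Nrm_neg (v : n → ℝ) : Nrm (-v) = Nrm v := by
  unfold Nrm
  congr 1
  exact Finset.sum_congr rfl fun i _ => by simp

lemma Nrm_sub_le (v w : n → ℝ) : Nrm (v - w) ≤ Nrm v + Nrm w := by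
  rw [sub_eq_add_neg]
  exact (Nrm_add_le v (-w)).trans (by rw [Nrm_neg])

lemma Nrm_single (j : n) : Nrm (Pi.single j 1 : n → ℝ) = 1 := by
  unfold Nrm
  rw [show (∑ i, (Pi.single j 1 : n → ℝ) i ^ 2) = 1 by
    simp [Pi.single_apply, sq]]
  exact Real.sqrt_one

lemma Nrm_mulVec_of_orth (W : Matrix n n ℝ) (hW : Wᵀ * W = 1) (v : n → ℝ) :
    Nrm (W *ᵥ v) = Nrm v := by
  unfold Nrm
  congr 1
  have h1 : ∀ u : n → ℝ, ∑ i, u i ^ 2 = u ⬝ᵥ u := fun u => by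
    simp [dotProduct, sq]
  rw [h1, h1]
  calc (W *ᵥ v) ⬝ᵥ (W *ᵥ v) = ((W *ᵥ v) ᵥ* W) ⬝ᵥ v := Matrix.dotProduct_mulVec _ _ _
    _ = ((v ᵥ* Wᵀ) ᵥ* W) ⬝ᵥ v := by rw [Matrix.vecMul_transpose]
    _ = (v ᵥ* (Wᵀ * W)) ⬝ᵥ v := by rw [Matrix.vecMul_vecMul]
    _ = v ⬝ᵥ v := by rw [hW, Matrix.vecMul_one]

lemma schur_bound (K : Matrix n n ℝ) (C : ℝ) (hC : 0 ≤ C)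
    (hrow : ∀ x, ∑ y, |K x y| ≤ C) (hcol : ∀ y, ∑ x, |K x y| ≤ C) (h : n → ℝ) :
    Nrm (K *ᵥ h) ≤ C * Nrm h := by
  have key : ∑ x, (K *ᵥ h) x ^ 2 ≤ C ^ 2 * ∑ y, h y ^ 2 := by
    have step1 : ∀ x, (K *ᵥ h) x ^ 2 ≤ C * ∑ y, |K x y| * h y ^ 2 := by
      intro x
      have e1 : (K *ᵥ h) x = ∑ y, K x y * h y := by
        simp [Matrix.mulVec, dotProduct]
      have e2 : (K *ᵥ h) x ^ 2 ≤ (∑ y, |K x y| * |h y|) ^ 2 := by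
        rw [e1, ← sq_abs]
        have habs : |∑ y, K x y * h y| ≤ ∑ y, |K x y| * |h y| := by
          refine (Finset.abs_sum_le_sum_abs _ _).trans ?_
          exact le_of_eq (Finset.sum_congr rfl fun y _ => abs_mul _ _)
        exact pow_le_pow_left₀ (abs_nonneg _) habs 2
      have e3 : (∑ y, |K x y| * |h y|) ^ 2 ≤ (∑ y, |K x y|) * ∑ y, |K x y| * h y ^ 2 := by
        have := Finset.sum_mul_sq_le_sq_mul_sq Finset.univ
          (fun y => Real.sqrt |K x y|) (fun y => Real.sqrt |K x y| * |h y|)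
        simp only [← mul_assoc, Real.mul_self_sqrt (abs_nonneg _), mul_pow,
          Real.sq_sqrt (abs_nonneg _), sq_abs] at this
        exact this
      have e4 : (∑ y, |K x y|) * (∑ y, |K x y| * h y ^ 2) ≤ C * ∑ y, |K x y| * h y ^ 2 := by
        apply mul_le_mul_of_nonneg_right (hrow x)
        exact Finset.sum_nonneg fun y _ => mul_nonneg (abs_nonneg _) (sq_nonneg _)
      exact e2.trans (e3.trans e4)
    calc ∑ x, (K *ᵥ h) x ^ 2 ≤ ∑ x, C * ∑ y, |K x y| * h y ^ 2 :=
          Finset.sum_le_sum fun x _ => step1 x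
      _ = C * ∑ y, (∑ x, |K x y|) * h y ^ 2 := by
          rw [← Finset.mul_sum, Finset.sum_comm]
          congr 1
          exact Finset.sum_congr rfl fun y _ => (Finset.sum_mul _ _ _).symm
      _ ≤ C * ∑ y, C * h y ^ 2 := by
          apply mul_le_mul_of_nonneg_left _ hC
          exact Finset.sum_le_sum fun y _ =>
            mul_le_mul_of_nonneg_right (hcol y) (sq_nonneg _)
      _ = C ^ 2 * ∑ y, h y ^ 2 := by rw [← Finset.mul_sum]; ring
  have := Real.sqrt_le_sqrt key
  rw [Real.sqrt_mul (sq_nonneg C), Real.sqrt_sq hC] at this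
  exact this

end GFISAux

open GFISAux Matrix in
/-- **Initial-scale Green function decay**: if `E` is `δ`-away from the spectrum of
`H_Λ` and `4dε ≤ δ`, the Green function decays exponentially at rate `ε`. -/
theorem green_function_initial_scale
    (d : ℕ) (hd : 1 ≤ d) (ε δ : ℝ) (hε0 : 0 < ε) (hε : ε ≤ 1 / 2) (hδ : 0 < δ)
    (hεδ : 4 * d * ε ≤ δ) (V : ZLat d → ℝ)
    (Λ : Finset (ZLat d)) (hΛ : IsBox Λ) (E : ℝ)
    (hres : δ ≤ Metric.infDist E (spectrum ℝ (latticeMatrix ε V Λ))) :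
    ∀ x y : Λ, |greenFn ε V Λ E x y| ≤ 4 * δ⁻¹ * ε ^ ‖(x : ZLat d) - (y : ZLat d)‖ := by
  classical
  intro x y0
  have hε1 : ε ≤ 1 := hε.trans (by norm_num)
  set A := latticeMatrix ε V Λ with hA_def
  set M := A - E • (1 : Matrix Λ Λ ℝ) with hM_def
  -- neighbor relation and its symmetry
  set nbr : Λ → Λ → Prop := fun a b => ∃ j : Fin d,
      (b : ZLat d) = (a : ZLat d) + Pi.single j 1 ∨
      (b : ZLat d) = (a : ZLat d) - Pi.single j 1 with hnbr_def
  have hsymm_nbr : ∀ a b : Λ, nbr a b ↔ nbr b a := by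
    have key : ∀ a b : Λ, nbr a b → nbr b a := by
      rintro a b ⟨j, h | h⟩
      · exact ⟨j, Or.inr (by rw [h]; abel)⟩
      · exact ⟨j, Or.inl (by rw [h]; abel)⟩
    exact fun a b => ⟨key a b, key b a⟩
  -- entries of A and M
  have hA_apply : ∀ a b : Λ, A a b =
      ε ^ 2 * (if nbr a b then 1 else 0) + (if a = b then V a else 0) := by
    intro a b
    rw [hA_def, latticeMatrix]
  have hM_offdiag : ∀ a b : Λ, a ≠ b → M a b = ε ^ 2 * (if nbr a b then 1 else 0) := by
    intro a b hab
    rw [hM_def]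
    simp only [Matrix.sub_apply, Matrix.smul_apply, Matrix.one_apply_ne hab, smul_zero, sub_zero,
      hA_apply, if_neg hab, add_zero]
  have hM_nbr : ∀ a b : Λ, a ≠ b → nbr a b → M a b = ε ^ 2 := by
    intro a b hab hn; rw [hM_offdiag a b hab, if_pos hn, mul_one]
  have hM_far : ∀ a b : Λ, a ≠ b → ¬ nbr a b → M a b = 0 := by
    intro a b hab hn; rw [hM_offdiag a b hab, if_neg hn, mul_zero]
  -- Hermitian
  have hHerm : A.IsHermitian := by
    rw [Matrix.IsHermitian]
    ext a b
    rw [Matrix.conjTranspose_apply, star_trivial, hA_apply, hA_apply]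
    congr 1
    · rw [if_congr (hsymm_nbr b a) rfl rfl]
    · by_cases h : a = b
      · subst h; rfl
      · rw [if_neg h, if_neg (Ne.symm h)]
  have hMHerm : M.IsHermitian := by
    rw [hM_def, Matrix.IsHermitian, Matrix.conjTranspose_sub, hHerm]
    congr 1
    rw [Matrix.conjTranspose_smul, star_trivial, Matrix.conjTranspose_one]
  -- eigenvalues far from E
  set lam := hHerm.eigenvalues with hlam_def
  set U : Matrix Λ Λ ℝ := (hHerm.eigenvectorUnitary : Matrix Λ Λ ℝ) with hU_def
  have hU1 : star U * U = 1 := Matrix.mem_unitaryGroup_iff'.mp hHerm.eigenvectorUnitary.2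
  have hU2 : U * star U = 1 := Matrix.mem_unitaryGroup_iff.mp hHerm.eigenvectorUnitary.2
  have hstar : ∀ W : Matrix Λ Λ ℝ, star W = Wᵀ := fun W => by
    rw [Matrix.star_eq_conjTranspose, Matrix.conjTranspose_eq_transpose_of_trivial]
  have heig : ∀ i : Λ, δ ≤ |lam i - E| := by
    intro i
    have h1 := hHerm.eigenvalues_mem_spectrum_real i
    have h2 : Metric.infDist E (spectrum ℝ A) ≤ dist E (lam i) :=
      Metric.infDist_le_dist_of_mem h1
    rw [Real.dist_eq, abs_sub_comm] at h2
    exact hres.trans h2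
  -- decomposition of M
  have hM_eq : M = U * Matrix.diagonal (fun i => lam i - E) * star U := by
    have h1 := hHerm.spectral_theorem
    rw [RCLike.ofReal_real_eq_id] at h1
    have h2 : E • (1 : Matrix Λ Λ ℝ) = U * (E • (1 : Matrix Λ Λ ℝ)) * star U := by
      rw [Matrix.mul_smul, Matrix.smul_mul, mul_one, hU2]
    rw [hM_def]
    calc A - E • (1 : Matrix Λ Λ ℝ)
        = U * Matrix.diagonal (id ∘ lam) * star U - U * (E • 1) * star U := by
          rw [Unitary.conjStarAlgAut_apply] at h1
          rw [← h1, ← h2]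
      _ = U * (Matrix.diagonal (id ∘ lam) - E • 1) * star U := by
          rw [Matrix.mul_sub, Matrix.sub_mul]
      _ = U * Matrix.diagonal (fun i => lam i - E) * star U := by
          rw [Matrix.smul_one_eq_diagonal, Matrix.diagonal_sub]
          rfl
  -- resolvent norm lower bound
  have hNlow : ∀ v : Λ → ℝ, δ * Nrm v ≤ Nrm (M *ᵥ v) := by
    intro v
    set w : Λ → ℝ := star U *ᵥ v with hw_def
    have hUorth : Uᵀ * U = 1 := by rw [← hstar U]; exact hU1
    have hUTorth : (star U)ᵀ * (star U) = 1 := by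
      rw [hstar U, Matrix.transpose_transpose]
      rw [← hstar U]; exact hU2
    have hNw : Nrm w = Nrm v := Nrm_mulVec_of_orth (star U) hUTorth v
    have hMv : M *ᵥ v = U *ᵥ (Matrix.diagonal (fun i => lam i - E) *ᵥ w) := by
      rw [hw_def, Matrix.mulVec_mulVec, Matrix.mulVec_mulVec, hM_eq]
    have hdiag : δ * Nrm w ≤ Nrm (Matrix.diagonal (fun i => lam i - E) *ᵥ w) := by
      have hsum : δ ^ 2 * ∑ i, w i ^ 2 ≤
          ∑ i, (Matrix.diagonal (fun i => lam i - E) *ᵥ w) i ^ 2 := by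
        rw [Finset.mul_sum]
        refine Finset.sum_le_sum fun i _ => ?_
        rw [Matrix.mulVec_diagonal, mul_pow]
        apply mul_le_mul_of_nonneg_right _ (sq_nonneg _)
        have := heig i
        calc δ ^ 2 ≤ |lam i - E| ^ 2 := by
              apply pow_le_pow_left₀ hδ.le this
          _ = (lam i - E) ^ 2 := sq_abs _
      have := Real.sqrt_le_sqrt hsum
      rw [Real.sqrt_mul (sq_nonneg δ), Real.sqrt_sq hδ.le] at this
      exact this
    calc δ * Nrm v = δ * Nrm w := by rw [hNw]
      _ ≤ Nrm (Matrix.diagonal (fun i => lam i - E) *ᵥ w) := hdiag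
      _ = Nrm (U *ᵥ (Matrix.diagonal (fun i => lam i - E) *ᵥ w)) :=
          (Nrm_mulVec_of_orth U hUorth _).symm
      _ = Nrm (M *ᵥ v) := by rw [hMv]
  -- invertibility
  have hEnot : E ∉ spectrum ℝ A := by
    intro hmem
    have : Metric.infDist E (spectrum ℝ A) ≤ dist E E := Metric.infDist_le_dist_of_mem hmem
    rw [dist_self] at this
    linarith [hres.trans this]
  have hunit : IsUnit M := by
    have h1 := spectrum.notMem_iff.mp hEnot
    rw [Algebra.algebraMap_eq_smul_one] at h1
    have h2 : IsUnit (-(E • (1 : Matrix Λ Λ ℝ) - A)) := h1.neg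
    rw [neg_sub] at h2
    exact h2
  have hdet : IsUnit M.det := (Matrix.isUnit_iff_isUnit_det M).mp hunit
  have hMinv : M * M⁻¹ = 1 := Matrix.mul_nonsing_inv M hdet
  -- the weighted vector
  set F : Λ → ℝ := fun z => ‖(z : ZLat d) - (y0 : ZLat d)‖ with hF_def
  set g : Λ → ℝ := fun z => greenFn ε V Λ E z y0 with hg_def
  set h : Λ → ℝ := fun z => ε ^ (-(F z)) * g z with hh_def
  set K : Matrix Λ Λ ℝ := fun a b => (ε ^ (F b - F a) - 1) * M a b with hK_def
  have hF0 : F y0 = 0 := by rw [hF_def]; simp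
  have hMg : M *ᵥ g = Pi.single y0 1 := by
    ext a
    have h1 : (M *ᵥ g) a = (M * M⁻¹) a y0 := by
      rw [Matrix.mul_apply, Matrix.mulVec, dotProduct]
      rfl
    rw [h1, hMinv, Matrix.one_apply, Pi.single_apply]
  -- conjugation identity
  have hC1 : M *ᵥ h + K *ᵥ h = Pi.single y0 1 := by
    ext a
    have h1 : (M *ᵥ h + K *ᵥ h) a = ∑ b, ε ^ (F b - F a) * (M a b * h b) := by
      rw [Pi.add_apply]
      rw [Matrix.mulVec, Matrix.mulVec, dotProduct, dotProduct,
        ← Finset.sum_add_distrib]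
      refine Finset.sum_congr rfl fun b _ => ?_
      rw [hK_def]
      ring
    have h2 : ∀ b : Λ, ε ^ (F b - F a) * (M a b * h b) = ε ^ (-(F a)) * (M a b * g b) := by
      intro b
      rw [hh_def]
      have : ε ^ (F b - F a) * ε ^ (-(F b)) = ε ^ (-(F a)) := by
        rw [← Real.rpow_add hε0]
        ring_nf
      calc ε ^ (F b - F a) * (M a b * (ε ^ (-(F b)) * g b))
          = (ε ^ (F b - F a) * ε ^ (-(F b))) * (M a b * g b) := by ring
        _ = ε ^ (-(F a)) * (M a b * g b) := by rw [this]
    rw [h1]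
    simp_rw [h2]
    rw [← Finset.mul_sum]
    rw [show (∑ b, M a b * g b) = (M *ᵥ g) a from rfl, hMg]
    by_cases ha : a = y0
    · subst ha
      rw [hF0]
      norm_num
    · simp [Pi.single_apply, ha]
  -- norm of single vectors
  have hsingle_norm : ∀ j : Fin d, ‖(Pi.single j 1 : ZLat d)‖ = 1 := by
    intro j
    apply le_antisymm
    · apply pi_norm_le_iff_of_nonneg (by norm_num) |>.mpr
      intro i
      rw [Pi.single_apply]
      by_cases hij : i = j
      · rw [if_pos hij]; norm_num
      · rw [if_neg hij]; norm_num
    · have := norm_le_pi_norm (Pi.single j 1 : ZLat d) j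
      simpa using this
  have hFnbr : ∀ a b : Λ, nbr a b → |F b - F a| ≤ 1 := by
    intro a b hn
    have h1 : |F b - F a| ≤ ‖((b : ZLat d) - y0) - ((a : ZLat d) - y0)‖ :=
      abs_norm_sub_norm_le _ _
    have h2 : ((b : ZLat d) - y0) - ((a : ZLat d) - y0) = (b : ZLat d) - (a : ZLat d) := by abel
    rw [h2] at h1
    obtain ⟨j, hj | hj⟩ := hn
    · rw [hj, add_sub_cancel_left, hsingle_norm j] at h1; exact h1
    · rw [hj] at h1
      rw [show (a : ZLat d) - Pi.single j 1 - (a : ZLat d) = -(Pi.single j 1) by abel,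
        norm_neg, hsingle_norm j] at h1
      exact h1
  -- entry bound for K
  have hK_le : ∀ a b : Λ, |K a b| ≤ if nbr a b then ε else 0 := by
    intro a b
    by_cases hab : a = b
    · subst hab
      have : K a a = 0 := by
        rw [hK_def]
        simp [Real.rpow_zero]
      rw [this, abs_zero]
      split <;> [exact hε0.le; exact le_refl 0]
    · by_cases hn : nbr a b
      · rw [if_pos hn, hK_def]
        have hMab : M a b = ε ^ 2 := hM_nbr a b hab hn
        show |(ε ^ (F b - F a) - 1) * M a b| ≤ ε
        rw [hMab, abs_mul]
        have ht := hFnbr a b hn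
        have htl : -1 ≤ F b - F a := by
          have := abs_le.mp ht; linarith [this.1]
        have hup : ε ^ (F b - F a) ≤ ε⁻¹ := by
          have := Real.rpow_le_rpow_of_exponent_ge hε0 hε1 htl
          rwa [Real.rpow_neg_one] at this
        have hinv1 : (1 : ℝ) ≤ ε⁻¹ := by
          rw [le_inv_comm₀] <;> simp [hε0, hε1]
        have habs : |ε ^ (F b - F a) - 1| ≤ ε⁻¹ := by
          rw [abs_le]
          constructor
          · have : (0:ℝ) ≤ ε ^ (F b - F a) := Real.rpow_nonneg hε0.le _
            linarith
          · linarith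
        calc |ε ^ (F b - F a) - 1| * |ε ^ 2|
            ≤ ε⁻¹ * ε ^ 2 := by
              apply mul_le_mul habs (le_of_eq (abs_of_nonneg (sq_nonneg ε)))
                (abs_nonneg _) (by positivity)
          _ = ε := by field_simp [hε0.ne']
      · rw [if_neg hn, hK_def]
        show |(ε ^ (F b - F a) - 1) * M a b| ≤ 0
        rw [hM_far a b hab hn, mul_zero, abs_zero]
  -- row sums
  have hrowcount : ∀ a : Λ, (∑ b : Λ, if nbr a b then ε else 0) ≤ 2 * d * ε := by
    intro a
    have hcard : (Finset.univ.filter (fun b : Λ => nbr a b)).card ≤ 2 * d := by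
      set T : Finset (ZLat d) := (Finset.univ : Finset (Fin d × Bool)).image
        (fun p => if p.2 then (a : ZLat d) + Pi.single p.1 1
          else (a : ZLat d) - Pi.single p.1 1) with hT_def
      have hmaps : ∀ b ∈ Finset.univ.filter (fun b : Λ => nbr a b), (b : ZLat d) ∈ T := by
        intro b hb
        obtain ⟨j, hj | hj⟩ := (Finset.mem_filter.mp hb).2
        · exact Finset.mem_image.mpr ⟨(j, true), Finset.mem_univ _, by simp [hj]⟩
        · exact Finset.mem_image.mpr ⟨(j, false), Finset.mem_univ _, by simp [hj]⟩
      have hinj : Set.InjOn (fun b : Λ => (b : ZLat d))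
          (Finset.univ.filter (fun b : Λ => nbr a b)) :=
        Subtype.coe_injective.injOn
      have h1 := Finset.card_le_card_of_injOn _ hmaps hinj
      have h2 : T.card ≤ 2 * d := by
        calc T.card ≤ (Finset.univ : Finset (Fin d × Bool)).card := Finset.card_image_le
          _ = 2 * d := by
            rw [Finset.card_univ, Fintype.card_prod, Fintype.card_fin, Fintype.card_bool]
            ring
      exact h1.trans h2
    calc (∑ b : Λ, if nbr a b then ε else 0)
        = ∑ b ∈ Finset.univ.filter (fun b : Λ => nbr a b), ε := (Finset.sum_filter _ _).symm
      _ = (Finset.univ.filter (fun b : Λ => nbr a b)).card * ε := by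
          rw [Finset.sum_const, nsmul_eq_mul]
      _ ≤ (2 * d : ℕ) * ε := by
          apply mul_le_mul_of_nonneg_right _ hε0.le
          exact_mod_cast hcard
      _ = 2 * d * ε := by push_cast; ring
  have hrow : ∀ a : Λ, ∑ b, |K a b| ≤ 2 * d * ε := fun a =>
    (Finset.sum_le_sum fun b _ => hK_le a b).trans (hrowcount a)
  have hcol : ∀ b : Λ, ∑ a, |K a b| ≤ 2 * d * ε := by
    intro b
    have h1 : ∀ a : Λ, |K a b| ≤ if nbr b a then ε else 0 := by
      intro a
      refine (hK_le a b).trans ?_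
      rw [if_congr (hsymm_nbr a b) rfl rfl]
    exact (Finset.sum_le_sum fun a _ => h1 a).trans (hrowcount b)
  -- Schur bound and conclusion
  have hC : (0:ℝ) ≤ 2 * d * ε := by positivity
  have hKh : Nrm (K *ᵥ h) ≤ (2 * d * ε) * Nrm h := schur_bound K _ hC hrow hcol h
  have hCδ : 2 * (d:ℝ) * ε ≤ δ / 2 := by linarith
  have hNh : Nrm h ≤ 2 * δ⁻¹ := by
    have h1 : M *ᵥ h = Pi.single y0 1 - K *ᵥ h := eq_sub_of_add_eq hC1
    have h2 : δ * Nrm h ≤ Nrm (M *ᵥ h) := hNlow h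
    have h3 : Nrm (M *ᵥ h) ≤ 1 + Nrm (K *ᵥ h) := by
      rw [h1]
      have := Nrm_sub_le (Pi.single y0 1 : Λ → ℝ) (K *ᵥ h)
      rwa [Nrm_single] at this
    have h4 : Nrm (K *ᵥ h) ≤ (δ / 2) * Nrm h :=
      hKh.trans (mul_le_mul_of_nonneg_right hCδ (Nrm_nonneg h))
    have h5 : (δ / 2) * Nrm h ≤ 1 := by linarith
    have hhalf : (0:ℝ) < δ / 2 := by linarith
    have h6 : Nrm h * (δ / 2) ≤ 1 := by linarith
    have h7 : Nrm h ≤ 1 / (δ / 2) := (le_div_iff₀ hhalf).mpr h6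
    rwa [one_div, inv_div, div_eq_mul_inv] at h7
  -- final bound
  have hgx : g x = ε ^ (F x) * h x := by
    rw [hh_def]
    have : ε ^ (F x) * ε ^ (-(F x)) = 1 := by
      rw [← Real.rpow_add hε0]
      norm_num
    calc g x = (ε ^ (F x) * ε ^ (-(F x))) * g x := by rw [this, one_mul]
      _ = ε ^ (F x) * (ε ^ (-(F x)) * g x) := by ring
  have hrpos : (0:ℝ) ≤ ε ^ (F x) := Real.rpow_nonneg hε0.le _
  have final : |g x| ≤ 4 * δ⁻¹ * ε ^ (F x) := by
    rw [hgx, abs_mul, abs_of_nonneg hrpos]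
    have h1 : |h x| ≤ 2 * δ⁻¹ := (abs_le_Nrm h x).trans hNh
    calc ε ^ (F x) * |h x| ≤ ε ^ (F x) * (2 * δ⁻¹) :=
          mul_le_mul_of_nonneg_left h1 hrpos
      _ ≤ 4 * δ⁻¹ * ε ^ (F x) := by
          have : (0:ℝ) ≤ δ⁻¹ := by positivity
          nlinarith
  exact final


end
end

section
/- Let v ∈ C²(𝕋) be even with exactly two nondegenerate critical points, and let ω satisfy ‖nω‖ ≥ c₀ n^{-2} for all integers n ≥ 1, with c₀ > 0. Then there exist C ≥ 1 and δ̄ ∈ (0,1), depending only on v and c₀, such that for every θ* ∈ ℝ, every E* ∈ ℝ, and every 0 < δ₀ ≤ δ̄ the following holds for the set 𝒮₀ = {n ∈ ℤ : |v(θ* + nω) − E*| ≤ δ₀}: (i) any two distinct k, ℓ ∈ 𝒮₀ satisfy min(‖(k−ℓ)ω‖, ‖2θ* + (k+ℓ)ω‖)² ≤ C δ₀; (ii) any three pairwise distinct points k, ℓ, n ∈ 𝒮₀ satisfy max(|k−ℓ|, |ℓ−n|) ≥ C^{-1} δ₀^{-1/4}. -/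
open MeasureTheory

noncomputable section

/-- Distance of a real number to the nearest integer. -/
def distToInt (x : ℝ) : ℝ := |x - round x|

/-- `v` has exactly two nondegenerate critical points per period. -/
def TwoNondegenerateCriticalPoints (v : ℝ → ℝ) : Prop :=
  ∃ θ₁ θ₂ : ℝ, θ₁ ∈ Set.Ico (0 : ℝ) 1 ∧ θ₂ ∈ Set.Ico (0 : ℝ) 1 ∧ θ₁ ≠ θ₂ ∧
    deriv v θ₁ = 0 ∧ deriv v θ₂ = 0 ∧
    deriv (deriv v) θ₁ ≠ 0 ∧ deriv (deriv v) θ₂ ≠ 0 ∧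
    ∀ θ ∈ Set.Ico (0 : ℝ) 1, deriv v θ = 0 → θ = θ₁ ∨ θ = θ₂



lemma distToInt_nonneg (x : ℝ) : 0 ≤ distToInt x := abs_nonneg _

lemma distToInt_le_half (x : ℝ) : distToInt x ≤ 1/2 := abs_sub_round x

lemma distToInt_le (x : ℝ) (m : ℤ) : distToInt x ≤ |x - m| := by
  rcases eq_or_ne m (round x) with h|h
  · simp [distToInt, h]
  · have h1 : (1:ℝ) ≤ |(m:ℝ) - round x| := by
      rw [← Int.cast_sub, ← Int.cast_abs]
      exact_mod_cast Int.one_le_abs (sub_ne_zero.mpr h)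
    have h2 := abs_sub_round x
    have h3 : |(m:ℝ) - round x| ≤ |x - m| + |x - round x| := by
      calc |(m:ℝ) - round x| = |((m:ℝ) - x) - ((round x:ℝ) - x)| := by ring_nf
        _ ≤ |(m:ℝ) - x| + |(round x:ℝ) - x| := abs_sub _ _
        _ = |x - m| + |x - round x| := by rw [abs_sub_comm, abs_sub_comm ((round x:ℝ)) x]
    unfold distToInt
    linarith

lemma distToInt_eq_abs {x : ℝ} (h : |x| ≤ 1/2) : distToInt x = |x| := by
  refine le_antisymm (by simpa using distToInt_le x 0) ?_
  rcases eq_or_ne (round x) 0 with h0|h0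
  · simp [distToInt, h0]
  · have h1 : (1:ℝ) ≤ |(round x : ℝ)| := by
      rw [← Int.cast_abs]; exact_mod_cast Int.one_le_abs h0
    have : |(round x:ℝ)| ≤ |x - round x| + |x| := by
      calc |(round x:ℝ)| = |x - (x - round x)| := by ring_nf
        _ ≤ |x| + |x - round x| := abs_sub _ _
        _ = _ := by ring
    unfold distToInt; linarith

lemma distToInt_add_int (x : ℝ) (m : ℤ) : distToInt (x + m) = distToInt x := by
  unfold distToInt
  rw [round_add_intCast]
  push_cast
  ring_nf

lemma distToInt_neg (x : ℝ) : distToInt (-x) = distToInt x := by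
  refine le_antisymm ?_ ?_
  · calc distToInt (-x) ≤ |(-x) - (-(round x) : ℤ)| := distToInt_le _ _
      _ = |x - round x| := by push_cast; rw [← abs_neg]; ring_nf
  · calc distToInt x ≤ |x - (-(round (-x)) : ℤ)| := distToInt_le _ _
      _ = |(-x) - round (-x)| := by push_cast; rw [← abs_neg]; ring_nf

lemma distToInt_eq_of_sub_int {a b : ℝ} (h : ∃ m : ℤ, a - b = m) : distToInt a = distToInt b := by
  obtain ⟨m, hm⟩ := h
  have : a = b + m := by linarith
  rw [this, distToInt_add_int]

lemma distToInt_eq_of_add_int {a b : ℝ} (h : ∃ m : ℤ, a + b = m) : distToInt a = distToInt b := by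
  obtain ⟨m, hm⟩ := h
  have : a = -b + m := by linarith
  rw [this, distToInt_add_int, distToInt_neg]

lemma distToInt_add_le (a b : ℝ) : distToInt (a + b) ≤ distToInt a + distToInt b := by
  calc distToInt (a+b) ≤ |a + b - ((round a : ℤ) + (round b : ℤ) : ℤ)| := distToInt_le _ _
    _ = |(a - round a) + (b - round b)| := by push_cast; ring_nf
    _ ≤ _ := abs_add_le _ _

lemma distToInt_eq_min {x : ℝ} (h0 : 0 ≤ x) (h1 : x ≤ 1) : distToInt x = min x (1 - x) := by
  rcases le_total x (1/2) with h|h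
  · rw [distToInt_eq_abs (by rw [abs_of_nonneg h0]; exact h), abs_of_nonneg h0,
      min_eq_left (by linarith)]
  · have : distToInt x = distToInt (x - 1) := by
      rw [← distToInt_add_int (x-1) 1]; norm_num
    rw [this, distToInt_eq_abs (by rw [abs_of_nonpos (by linarith)]; linarith),
      abs_of_nonpos (by linarith), min_eq_right (by linarith)]
    ring

lemma distToInt_natAbs (m : ℤ) (ω : ℝ) : distToInt ((m.natAbs : ℝ) * ω) = distToInt (m * ω) := by
  have h1 : ((m.natAbs : ℕ) : ℝ) = |(m:ℝ)| := by rw [Nat.cast_natAbs]; push_cast; ring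
  rw [h1]
  rcases abs_cases (m:ℝ) with ⟨h,_⟩|⟨h,_⟩
  · rw [h]
  · rw [h, show -(m:ℝ) * ω = -((m:ℝ)*ω) by ring, distToInt_neg]



lemma deriv_odd (v : ℝ → ℝ) (hv : ContDiff ℝ 2 v) (heven : ∀ θ : ℝ, v (-θ) = v θ) :
    ∀ θ : ℝ, deriv v (-θ) = - deriv v θ := by
  intro θ
  have hd : ∀ x : ℝ, HasDerivAt v (deriv v x) x := fun x =>
    (hv.differentiable (by norm_num) x).hasDerivAt
  have h1 : HasDerivAt (fun x : ℝ => v (-x)) (deriv v (-θ) * (-1)) θ :=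
    (hd (-θ)).comp θ (hasDerivAt_neg θ)
  have h2 : (fun x : ℝ => v (-x)) = v := funext heven
  rw [h2] at h1
  have := h1.unique (hd θ)
  linarith

lemma crit_facts (v : ℝ → ℝ) (hv : ContDiff ℝ 2 v) (hper : Function.Periodic v 1)
    (heven : ∀ θ : ℝ, v (-θ) = v θ) (hcrit : TwoNondegenerateCriticalPoints v) :
    deriv v 0 = 0 ∧ deriv v (1/2) = 0 ∧ deriv (deriv v) 0 ≠ 0 ∧
      deriv (deriv v) (1/2) ≠ 0 ∧ ∀ θ ∈ Set.Ioo (0:ℝ) (1/2), deriv v θ ≠ 0 := by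
  have hodd := deriv_odd v hv heven
  have hd : ∀ x : ℝ, HasDerivAt v (deriv v x) x := fun x =>
    (hv.differentiable (by norm_num) x).hasDerivAt
  have hperd : ∀ x : ℝ, deriv v (x + 1) = deriv v x := by
    intro x
    have h1 : HasDerivAt (fun y : ℝ => v (y + 1)) (deriv v (x+1) * 1) x :=
      (hd (x+1)).comp x ((hasDerivAt_id x).add_const 1)
    have h2 : (fun y : ℝ => v (y + 1)) = v := funext hper
    rw [h2] at h1
    have := h1.unique (hd x)
    linarith
  have h0 : deriv v 0 = 0 := by have := hodd 0; simp at this; linarith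
  have hhalf : deriv v (1/2) = 0 := by
    have h1 := hperd (-(1/2) : ℝ)
    have h2 := hodd (1/2)
    norm_num at h1
    linarith
  obtain ⟨θ₁, θ₂, hm1, hm2, hne, hd1, hd2, hn1, hn2, huniq⟩ := hcrit
  have e0 : (0:ℝ) = θ₁ ∨ (0:ℝ) = θ₂ := huniq 0 (by constructor <;> norm_num) h0
  have eh : (1/2:ℝ) = θ₁ ∨ (1/2:ℝ) = θ₂ := huniq (1/2) (by constructor <;> norm_num) hhalf
  have hset : (θ₁ = 0 ∧ θ₂ = 1/2) ∨ (θ₁ = 1/2 ∧ θ₂ = 0) := by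
    rcases e0 with e0|e0 <;> rcases eh with eh|eh
    · exfalso; rw [← e0] at eh; norm_num at eh
    · left; exact ⟨e0.symm, eh.symm⟩
    · right; exact ⟨eh.symm, e0.symm⟩
    · exfalso; rw [← e0] at eh; norm_num at eh
  have hn0 : deriv (deriv v) 0 ≠ 0 ∧ deriv (deriv v) (1/2) ≠ 0 := by
    rcases hset with ⟨a,b⟩|⟨a,b⟩
    · exact ⟨a ▸ hn1, b ▸ hn2⟩
    · exact ⟨b ▸ hn2, a ▸ hn1⟩
  refine ⟨h0, hhalf, hn0.1, hn0.2, ?_⟩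
  intro θ hθ hw
  have : θ = θ₁ ∨ θ = θ₂ := huniq θ ⟨hθ.1.le, by linarith [hθ.2]⟩ hw
  rcases hset with ⟨a,b⟩|⟨a,b⟩ <;> rcases this with h|h <;>
    (first | (rw [a] at h; linarith [hθ.1, hθ.2]) | (rw [b] at h; linarith [hθ.1, hθ.2]))


lemma grad_lower (v : ℝ → ℝ) (hv : ContDiff ℝ 2 v)
    (h0 : deriv v 0 = 0) (hh : deriv v (1/2) = 0)
    (ha : deriv (deriv v) 0 ≠ 0) (hb : deriv (deriv v) (1/2) ≠ 0)
    (hne : ∀ θ ∈ Set.Ioo (0:ℝ) (1/2), deriv v θ ≠ 0) :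
    ∃ c : ℝ, 0 < c ∧ ∀ θ ∈ Set.Icc (0:ℝ) (1/2), c * (θ - 2*θ^2) ≤ |deriv v θ| := by
  set w := deriv v with hwdef
  have hw1 : ContDiff ℝ 1 w := by
    have h := ContDiff.iterate_deriv' 1 1 (f := v) (by exact_mod_cast hv)
    simpa using h
  have hwc : Continuous w := hw1.continuous
  have hwd : Differentiable ℝ w := hw1.differentiable (by norm_num)
  have key : ∀ p : ℝ, w p = 0 → deriv w p ≠ 0 →
      ∃ η > 0, ∀ θ : ℝ, θ ≠ p → |θ - p| < η → (|deriv w p|/2) * |θ - p| ≤ |w θ| := by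
    intro p hp hdp
    have hda : HasDerivAt w (deriv w p) p := (hwd p).hasDerivAt
    have hslope := hasDerivAt_iff_tendsto_slope.mp hda
    have habs : Filter.Tendsto (fun θ => |slope w p θ|) (nhdsWithin p {p}ᶜ)
        (nhds |deriv w p|) := hslope.abs
    have hev : ∀ᶠ θ in nhdsWithin p {p}ᶜ, |deriv w p|/2 < |slope w p θ| :=
      habs.eventually (eventually_gt_nhds (half_lt_self (abs_pos.mpr hdp)))
    rw [eventually_nhdsWithin_iff, Metric.eventually_nhds_iff] at hev
    obtain ⟨η, hη, hev⟩ := hev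
    refine ⟨η, hη, ?_⟩
    intro θ hθp hdist
    have h1 := hev (y := θ) (by simpa [Real.dist_eq] using hdist) (by simpa using hθp)
    have h2 : slope w p θ = w θ / (θ - p) := by
      rw [slope_def_field, hp, sub_zero]
    rw [h2, abs_div] at h1
    have h3 : |θ - p| > 0 := abs_pos.mpr (sub_ne_zero.mpr hθp)
    rw [lt_div_iff₀ h3] at h1
    linarith
  obtain ⟨η₁, hη₁, hk1⟩ := key 0 h0 ha
  obtain ⟨η₂, hη₂, hk2⟩ := key (1/2) hh hb
  set η := min (min η₁ η₂) (1/4) with hηdef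
  have hηpos : 0 < η := by positivity
  have hηle : η ≤ 1/4 := min_le_right _ _
  have hK : IsCompact (Set.Icc η (1/2 - η)) := isCompact_Icc
  have hKne : (Set.Icc η (1/2 - η)).Nonempty := Set.nonempty_Icc.mpr (by linarith)
  obtain ⟨x₀, hx₀K, hx₀min⟩ := hK.exists_isMinOn hKne (hwc.abs.continuousOn)
  have hmpos : 0 < |w x₀| := by
    apply abs_pos.mpr
    apply hne x₀
    exact ⟨lt_of_lt_of_le hηpos hx₀K.1, lt_of_le_of_lt hx₀K.2 (by linarith)⟩
  set a2 := |deriv w 0| / 2 with ha2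
  set b2 := |deriv w (1/2)| / 2 with hb2
  have ha2p : 0 < a2 := by positivity
  have hb2p : 0 < b2 := by positivity
  refine ⟨min (min a2 b2) (8 * |w x₀|), by positivity, ?_⟩
  set c := min (min a2 b2) (8 * |w x₀|) with hcdef
  have hcpos : 0 < c := by positivity
  intro θ hθ
  obtain ⟨hθ0, hθ1⟩ := hθ
  rcases lt_or_ge θ η with hcase | hcase
  · -- θ ∈ [0, η)
    rcases eq_or_lt_of_le hθ0 with h|h
    · rw [← h]; simp
    · have := hk1 θ (ne_of_gt h) (by rw [sub_zero, abs_of_pos h]; exact lt_of_lt_of_le hcase (le_trans (min_le_left _ _) (min_le_left _ _)))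
      rw [sub_zero, abs_of_pos h] at this
      have hc1 : c ≤ a2 := le_trans (min_le_left _ _) (min_le_left _ _)
      nlinarith [sq_nonneg θ, mul_le_mul_of_nonneg_right hc1 h.le]
  · rcases lt_or_ge (1/2 - η) θ with hcase2 | hcase2
    · -- θ ∈ (1/2 - η, 1/2]
      rcases eq_or_lt_of_le hθ1 with h|h
      · rw [h]; norm_num
      · have hd : |θ - 1/2| < η₂ := by
          rw [abs_of_neg (by linarith)]
          have : η ≤ η₂ := le_trans (min_le_left _ _) (min_le_right _ _)
          linarith
        have := hk2 θ (by intro hx; rw [hx] at h; linarith) hd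
        rw [abs_of_neg (by linarith : θ - 1/2 < 0)] at this
        have hc1 : c ≤ b2 := le_trans (min_le_left _ _) (min_le_right _ _)
        have e1 : (0:ℝ) ≤ 1/2 - θ := by linarith
        have e2 : c * (θ - 2*θ^2) ≤ c * (1/2 - θ) := by
          nlinarith [mul_nonneg hcpos.le (sq_nonneg (θ - 1/2))]
        have e3 : c * (1/2 - θ) ≤ b2 * (1/2 - θ) := mul_le_mul_of_nonneg_right hc1 e1
        linarith
    · -- middle
      have hmin : |w x₀| ≤ |w θ| := hx₀min ⟨hcase, hcase2⟩
      have hc1 : c ≤ 8 * |w x₀| := min_le_right _ _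
      nlinarith [hmin, mul_nonneg hcpos.le (sq_nonneg (θ - 1/4))]


lemma int_lower (v : ℝ → ℝ) (hv : ContDiff ℝ 2 v) (c : ℝ) (hc : 0 < c)
    (hpos : ∀ θ ∈ Set.Icc (0:ℝ) (1/2), c * (θ - 2*θ^2) ≤ deriv v θ) :
    ∀ x y : ℝ, 0 ≤ y → y ≤ x → x ≤ 1/2 →
      (c/12) * ((x - y) * min (x+y) (1 - (x+y))) ≤ v x - v y := by
  intro x y hy hyx hx
  have hd : ∀ t : ℝ, HasDerivAt v (deriv v t) t := fun t =>
    (hv.differentiable (by norm_num) t).hasDerivAt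
  have hcont : Continuous (deriv v) := hv.continuous_deriv (by norm_num)
  have hint : IntervalIntegrable (deriv v) MeasureTheory.volume y x :=
    hcont.intervalIntegrable _ _
  have heq : ∫ t in y..x, deriv v t = v x - v y :=
    intervalIntegral.integral_eq_sub_of_hasDerivAt (fun t _ => hd t) hint
  have hP : ∀ t : ℝ, HasDerivAt (fun s : ℝ => c * (s^2/2 - 2*s^3/3)) (c * (t - 2*t^2)) t := by
    intro t
    have h2 := (hasDerivAt_pow 2 t).div_const 2
    have h3 := ((hasDerivAt_pow 3 t).const_mul (2:ℝ)).div_const 3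
    have h4 := (h2.sub h3).const_mul c
    refine h4.congr_deriv ?_
    push_cast; ring
  have hint2 : IntervalIntegrable (fun t : ℝ => c * (t - 2*t^2)) MeasureTheory.volume y x :=
    (by continuity : Continuous (fun t : ℝ => c * (t - 2*t^2))).intervalIntegrable _ _
  have heq2 : ∫ t in y..x, c * (t - 2*t^2) =
      c * (x^2/2 - 2*x^3/3) - c * (y^2/2 - 2*y^3/3) :=
    intervalIntegral.integral_eq_sub_of_hasDerivAt (fun t _ => hP t) hint2
  have hmono : ∫ t in y..x, c * (t - 2*t^2) ≤ ∫ t in y..x, deriv v t := by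
    apply intervalIntegral.integral_mono_on hyx hint2 hint
    intro t ht
    exact hpos t ⟨le_trans hy ht.1, le_trans ht.2 hx⟩
  rw [heq] at hmono
  rw [heq2] at hmono
  have halg : (c/12) * ((x - y) * min (x+y) (1 - (x+y))) ≤
      c * (x^2/2 - 2*x^3/3) - c * (y^2/2 - 2*y^3/3) := by
    have hd0 : (0:ℝ) ≤ x - y := sub_nonneg.mpr hyx
    have hx0 : (0:ℝ) ≤ x := le_trans hy hyx
    rcases min_cases (x+y) (1 - (x+y)) with ⟨hm, hcs⟩|⟨hm, hcs⟩ <;> rw [hm]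
    · have key : (x - y) * (x + y) ≤ 12 * (x^2/2 - 2*x^3/3) - 12 * (y^2/2 - 2*y^3/3) := by
        nlinarith [mul_nonneg (mul_nonneg hd0 (by linarith : (0:ℝ) ≤ x + y))
            (by linarith : (0:ℝ) ≤ 1 - 2*(x+y)),
          mul_nonneg (mul_nonneg hd0 hx0) hy,
          mul_nonneg hd0 (by linarith : (0:ℝ) ≤ x + y)]
      have := mul_le_mul_of_nonneg_left key hc.le
      nlinarith
    · have hu2 : (1:ℝ)/2 ≤ x + y := by linarith
      have hx2 : x ≤ 1/2 := hx
      have hy2 : y ≤ 1/2 := le_trans hyx hx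
      have key : (x - y) * (1 - (x+y)) ≤ 12 * (x^2/2 - 2*x^3/3) - 12 * (y^2/2 - 2*y^3/3) := by
        nlinarith [mul_nonneg hd0 (mul_nonneg (by linarith : (0:ℝ) ≤ 8*(x+y) - 3)
            (by linarith : (0:ℝ) ≤ 1 - (x+y))),
          mul_nonneg hd0 (mul_nonneg (by linarith : (0:ℝ) ≤ 1/2 - x)
            (by linarith : (0:ℝ) ≤ 1/2 - y))]
      have := mul_le_mul_of_nonneg_left key hc.le
      nlinarith
  linarith


lemma same_sign_aux (w : ℝ → ℝ) (hwc : Continuous w)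
    (hne : ∀ θ ∈ Set.Ioo (0:ℝ) (1/2), w θ ≠ 0)
    {p q : ℝ} (hp : p ∈ Set.Ioo (0:ℝ) (1/2)) (hq : q ∈ Set.Ioo (0:ℝ) (1/2))
    (hwp : 0 < w p) (hwq : w q < 0) : False := by
  rcases le_total p q with h|h
  · obtain ⟨t, ht, hwt⟩ := intermediate_value_Icc' h hwc.continuousOn
      (Set.mem_Icc.mpr ⟨hwq.le, hwp.le⟩)
    exact hne t ⟨lt_of_lt_of_le hp.1 ht.1, lt_of_le_of_lt ht.2 hq.2⟩ hwt
  · obtain ⟨t, ht, hwt⟩ := intermediate_value_Icc h hwc.continuousOn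
      (Set.mem_Icc.mpr ⟨hwq.le, hwp.le⟩)
    exact hne t ⟨lt_of_lt_of_le hq.1 ht.1, lt_of_le_of_lt ht.2 hp.2⟩ hwt

lemma sign_dichotomy (w : ℝ → ℝ) (hwc : Continuous w)
    (hne : ∀ θ ∈ Set.Ioo (0:ℝ) (1/2), w θ ≠ 0) :
    (∀ θ ∈ Set.Ioo (0:ℝ) (1/2), 0 < w θ) ∨ (∀ θ ∈ Set.Ioo (0:ℝ) (1/2), w θ < 0) := by
  have hq : ((1:ℝ)/4) ∈ Set.Ioo (0:ℝ) (1/2) := by constructor <;> norm_num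
  rcases lt_trichotomy (w (1/4)) 0 with hw4|hw4|hw4
  · right; intro θ hθ
    rcases lt_trichotomy (w θ) 0 with h|h|h
    · exact h
    · exact absurd h (hne θ hθ)
    · exact absurd (same_sign_aux w hwc hne hθ hq h hw4) not_false
  · exact absurd hw4 (hne _ hq)
  · left; intro θ hθ
    rcases lt_trichotomy (w θ) 0 with h|h|h
    · exact absurd (same_sign_aux w hwc hne hq hθ hw4 h) not_false
    · exact absurd h (hne θ hθ)
    · exact h
lemma aux_abs (v : ℝ → ℝ) (hv : ContDiff ℝ 2 v)
    (h0 : deriv v 0 = 0) (hh : deriv v (1/2) = 0)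
    (ha : deriv (deriv v) 0 ≠ 0) (hb : deriv (deriv v) (1/2) ≠ 0)
    (hne : ∀ θ ∈ Set.Ioo (0:ℝ) (1/2), deriv v θ ≠ 0) :
    ∃ c : ℝ, 0 < c ∧ ∀ x y : ℝ, 0 ≤ y → y ≤ x → x ≤ 1/2 →
      c * ((x - y) * min (x+y) (1 - (x+y))) ≤ |v x - v y| := by
  obtain ⟨c, hc, hgrad⟩ := grad_lower v hv h0 hh ha hb hne
  have hwc : Continuous (deriv v) := hv.continuous_deriv (by norm_num)
  refine ⟨c/12, by positivity, ?_⟩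
  intro x y hy hyx hx
  rcases sign_dichotomy (deriv v) hwc hne with hsgn|hsgn
  · have hpos : ∀ θ ∈ Set.Icc (0:ℝ) (1/2), c * (θ - 2*θ^2) ≤ deriv v θ := by
      intro θ hθ
      rcases eq_or_lt_of_le hθ.1 with e|l
      · rw [← e, h0]; norm_num
      rcases eq_or_lt_of_le hθ.2 with e2|l2
      · rw [e2, hh]; norm_num
      · have h1 := hgrad θ hθ
        rwa [abs_of_pos (hsgn θ ⟨l, l2⟩)] at h1
    have h2 := int_lower v hv c hc hpos x y hy hyx hx
    exact le_trans h2 (le_abs_self _)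
  · set g : ℝ → ℝ := fun θ => -(v θ) with hgdef
    have hg : ContDiff ℝ 2 g := hv.neg
    have hdg : deriv g = fun θ => -(deriv v θ) := by
      funext θ; exact deriv.neg
    have hpos : ∀ θ ∈ Set.Icc (0:ℝ) (1/2), c * (θ - 2*θ^2) ≤ deriv g θ := by
      intro θ hθ
      rw [hdg]
      simp only
      rcases eq_or_lt_of_le hθ.1 with e|l
      · rw [← e, h0]; norm_num
      rcases eq_or_lt_of_le hθ.2 with e2|l2
      · rw [e2, hh]; norm_num
      · have h1 := hgrad θ hθ
        rwa [abs_of_neg (hsgn θ ⟨l, l2⟩)] at h1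
    have h2 := int_lower g hg c hc hpos x y hy hyx hx
    have h3 : |v x - v y| = |g x - g y| := by
      rw [hgdef]
      simp only
      rw [show -v x - -v y = -(v x - v y) by ring, abs_neg]
    rw [h3]
    exact le_trans h2 (le_abs_self _)
lemma reduce (v : ℝ → ℝ) (hper : Function.Periodic v 1) (heven : ∀ θ : ℝ, v (-θ) = v θ) :
    ∀ x : ℝ, ∃ x' : ℝ, x' ∈ Set.Icc (0:ℝ) (1/2) ∧ v x' = v x ∧
      ((∃ m : ℤ, x' - x = m) ∨ (∃ m : ℤ, x' + x = m)) := by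
  intro x
  have hfr : Int.fract x = x - ⌊x⌋ := Int.self_sub_floor x ▸ rfl
  have hf0 : 0 ≤ Int.fract x := Int.fract_nonneg x
  have hf1 : Int.fract x < 1 := Int.fract_lt_one x
  have hvf : v (Int.fract x) = v x := by
    rw [hfr]
    have := hper.sub_int_mul_eq (x := x) ⌊x⌋
    simpa using this
  rcases le_total (Int.fract x) (1/2) with h|h
  · exact ⟨Int.fract x, ⟨hf0, h⟩, hvf, Or.inl ⟨-⌊x⌋, by rw [hfr]; push_cast; ring⟩⟩
  · refine ⟨1 - Int.fract x, ⟨by linarith, by linarith⟩, ?_, Or.inr ⟨⌊x⌋ + 1, by rw [hfr]; push_cast; ring⟩⟩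
    calc v (1 - Int.fract x) = v (-(Int.fract x - 1)) := by ring_nf
      _ = v (Int.fract x - 1) := heven _
      _ = v (Int.fract x) := by
          have := hper.sub_int_mul_eq (x := Int.fract x) 1
          simpa using this
      _ = v x := hvf
lemma key_lemma (v : ℝ → ℝ) (hv : ContDiff ℝ 2 v) (hper : Function.Periodic v 1)
    (heven : ∀ θ : ℝ, v (-θ) = v θ) (hcrit : TwoNondegenerateCriticalPoints v) :
    ∃ c : ℝ, 0 < c ∧ ∀ x y : ℝ,
      c * (distToInt (x - y) * distToInt (x + y)) ≤ |v x - v y| := by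
  obtain ⟨h0, hh, ha, hb, hne⟩ := crit_facts v hv hper heven hcrit
  obtain ⟨c, hc, habs⟩ := aux_abs v hv h0 hh ha hb hne
  refine ⟨c, hc, ?_⟩
  have hcase : ∀ a b : ℝ, a ∈ Set.Icc (0:ℝ) (1/2) → b ∈ Set.Icc (0:ℝ) (1/2) → b ≤ a →
      c * (distToInt (a - b) * distToInt (a + b)) ≤ |v a - v b| := by
    intro a b hA hB hord
    have e3 : distToInt (a - b) = a - b := by
      rw [distToInt_eq_abs (by rw [abs_of_nonneg (sub_nonneg.mpr hord)]; linarith [hA.2, hB.1]),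
        abs_of_nonneg (sub_nonneg.mpr hord)]
    have e4 : distToInt (a + b) = min (a + b) (1 - (a + b)) :=
      distToInt_eq_min (by linarith [hA.1, hB.1]) (by linarith [hA.2, hB.2])
    rw [e3, e4]
    exact habs a b hB.1 hord hA.2
  intro x y
  obtain ⟨x', hx'mem, hvx, hcx⟩ := reduce v hper heven x
  obtain ⟨y', hy'mem, hvy, hcy⟩ := reduce v hper heven y
  have hprod : distToInt (x - y) * distToInt (x + y)
      = distToInt (x' - y') * distToInt (x' + y') := by
    rcases hcx with ⟨m, hm⟩|⟨m, hm⟩ <;> rcases hcy with ⟨n, hn⟩|⟨n, hn⟩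
    · have e1 : distToInt (x - y) = distToInt (x' - y') :=
        distToInt_eq_of_sub_int ⟨n - m, by push_cast; linarith⟩
      have e2 : distToInt (x + y) = distToInt (x' + y') :=
        distToInt_eq_of_sub_int ⟨-m - n, by push_cast; linarith⟩
      rw [e1, e2]
    · have e1 : distToInt (x + y) = distToInt (x' - y') :=
        distToInt_eq_of_sub_int ⟨n - m, by push_cast; linarith⟩
      have e2 : distToInt (x - y) = distToInt (x' + y') :=
        distToInt_eq_of_sub_int ⟨-(m + n), by push_cast; linarith⟩
      rw [e1, e2]; ring
    · have e1 : distToInt (x' - y') = distToInt (x + y) :=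
        distToInt_eq_of_add_int ⟨m - n, by push_cast; linarith⟩
      have e2 : distToInt (x' + y') = distToInt (x - y) :=
        distToInt_eq_of_add_int ⟨m + n, by push_cast; linarith⟩
      rw [e1, e2]; ring
    · have e1 : distToInt (x' - y') = distToInt (x - y) :=
        distToInt_eq_of_add_int ⟨m - n, by push_cast; linarith⟩
      have e2 : distToInt (x' + y') = distToInt (x + y) :=
        distToInt_eq_of_add_int ⟨m + n, by push_cast; linarith⟩
      rw [e1, e2]
  rw [hprod, ← hvx, ← hvy]
  rcases le_total y' x' with hord|hord
  · exact hcase x' y' hx'mem hy'mem hord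
  · rw [abs_sub_comm, show x' - y' = -(y' - x') by ring, distToInt_neg,
      show x' + y' = y' + x' by ring]
    exact hcase y' x' hy'mem hx'mem hord

set_option maxHeartbeats 1000000 in
/-- Structure of the level-0 singular sites `𝒮₀ = {n : |v(θ* + nω) - E*| ≤ δ₀}`:
(i) any two distinct singular sites `k, ℓ` satisfy
`min(‖(k-ℓ)ω‖, ‖2θ* + (k+ℓ)ω‖)² ≤ C δ₀`; (ii) any three pairwise distinct singular
sites are spread over a distance `≥ C⁻¹ δ₀^{-1/4}`. -/
theorem singular_sites_structure
    (v : ℝ → ℝ) (hv : ContDiff ℝ 2 v) (hper : Function.Periodic v 1)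
    (heven : ∀ θ : ℝ, v (-θ) = v θ)
    (hcrit : TwoNondegenerateCriticalPoints v)
    (c₀ : ℝ) (hc₀ : 0 < c₀) :
    ∃ C dbar : ℝ, 1 ≤ C ∧ 0 < dbar ∧ dbar < 1 ∧
      ∀ ω : ℝ, (∀ n : ℕ, 1 ≤ n → c₀ / (n : ℝ) ^ 2 ≤ distToInt (n * ω)) →
        ∀ θstar Estar δ₀ : ℝ, 0 < δ₀ → δ₀ ≤ dbar →
          -- (i)
          (∀ k l : ℤ, k ≠ l →
            |v (θstar + k * ω) - Estar| ≤ δ₀ → |v (θstar + l * ω) - Estar| ≤ δ₀ →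
            (min (distToInt (((k : ℝ) - l) * ω)) (distToInt (2 * θstar + ((k : ℝ) + l) * ω))) ^ 2
              ≤ C * δ₀) ∧
          -- (ii)
          (∀ k l n : ℤ, k ≠ l → l ≠ n → k ≠ n →
            |v (θstar + k * ω) - Estar| ≤ δ₀ → |v (θstar + l * ω) - Estar| ≤ δ₀ →
            |v (θstar + n * ω) - Estar| ≤ δ₀ →
            C⁻¹ * δ₀ ^ (-(1 : ℝ) / 4) ≤ max |(k : ℝ) - l| |(l : ℝ) - n|) := by
  obtain ⟨c, hc, hkey⟩ := key_lemma v hv hper heven hcrit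
  set C₁ : ℝ := max 1 (2/c) with hC₁def
  have hC₁1 : (1:ℝ) ≤ C₁ := le_max_left _ _
  have hC₁c : 2/c ≤ C₁ := le_max_right _ _
  have hC₁pos : 0 < C₁ := lt_of_lt_of_le one_pos hC₁1
  set C : ℝ := max C₁ (1 + 64 * C₁ / c₀^2) with hCdef
  have hCC₁ : C₁ ≤ C := le_max_left _ _
  have hC1 : (1:ℝ) ≤ C := le_trans hC₁1 hCC₁
  have hCpos : 0 < C := by linarith
  refine ⟨C, 1/2, hC1, by norm_num, by norm_num, ?_⟩
  intro ω hdio θstar Estar δ₀ hδ hδbar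
  have part1 : ∀ k l : ℤ, k ≠ l →
      |v (θstar + k * ω) - Estar| ≤ δ₀ → |v (θstar + l * ω) - Estar| ≤ δ₀ →
      (min (distToInt (((k : ℝ) - l) * ω)) (distToInt (2 * θstar + ((k : ℝ) + l) * ω))) ^ 2
        ≤ C₁ * δ₀ := by
    intro k l hkl h1 h2
    have hxy : |v (θstar + k * ω) - v (θstar + l * ω)| ≤ 2*δ₀ := by
      calc |v (θstar + k * ω) - v (θstar + l * ω)|
          = |(v (θstar + k * ω) - Estar) - (v (θstar + l * ω) - Estar)| := by ring_nf
        _ ≤ |v (θstar + k * ω) - Estar| + |v (θstar + l * ω) - Estar| := abs_sub _ _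
        _ ≤ 2*δ₀ := by linarith
    have hkx := hkey (θstar + k * ω) (θstar + l * ω)
    have ex : (θstar + (k:ℝ) * ω) - (θstar + (l:ℝ) * ω) = ((k : ℝ) - l) * ω := by ring
    have ey : (θstar + (k:ℝ) * ω) + (θstar + (l:ℝ) * ω) = 2 * θstar + ((k : ℝ) + l) * ω := by
      ring
    rw [ex, ey] at hkx
    set d₁ := distToInt (((k : ℝ) - l) * ω) with hd₁
    set d₂ := distToInt (2 * θstar + ((k : ℝ) + l) * ω) with hd₂
    have hn1 : 0 ≤ d₁ := distToInt_nonneg _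
    have hn2 : 0 ≤ d₂ := distToInt_nonneg _
    have hmm : (min d₁ d₂)^2 ≤ d₁ * d₂ := by
      rw [sq]
      exact mul_le_mul (min_le_left _ _) (min_le_right _ _) (le_min hn1 hn2) hn1
    have hprod : c * (d₁ * d₂) ≤ 2*δ₀ := le_trans hkx hxy
    have h2c : d₁ * d₂ ≤ (2/c) * δ₀ := by
      rw [div_mul_eq_mul_div, le_div_iff₀ hc]
      linarith [hprod]
    have : (2/c) * δ₀ ≤ C₁ * δ₀ := mul_le_mul_of_nonneg_right hC₁c hδ.le
    linarith
  constructor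
  · intro k l hkl h1 h2
    have := part1 k l hkl h1 h2
    have h3 : C₁ * δ₀ ≤ C * δ₀ := mul_le_mul_of_nonneg_right hCC₁ hδ.le
    linarith
  · intro k l n hkl hln hkn h1 h2 h3
    set ρ := Real.sqrt (C₁ * δ₀) with hρdef
    have hρpos : 0 < ρ := Real.sqrt_pos.mpr (by positivity)
    have hρsq : ρ^2 = C₁ * δ₀ := Real.sq_sqrt (by positivity)
    have hmin : ∀ k' l' : ℤ, k' ≠ l' →
        |v (θstar + k' * ω) - Estar| ≤ δ₀ → |v (θstar + l' * ω) - Estar| ≤ δ₀ →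
        distToInt (((k' : ℝ) - l') * ω) ≤ ρ ∨
          distToInt (2 * θstar + ((k' : ℝ) + l') * ω) ≤ ρ := by
      intro k' l' hne' ha' hb'
      have hp := part1 k' l' hne' ha' hb'
      set m := min (distToInt (((k' : ℝ) - l') * ω))
        (distToInt (2 * θstar + ((k' : ℝ) + l') * ω)) with hmdef
      have hmn : 0 ≤ m := le_min (distToInt_nonneg _) (distToInt_nonneg _)
      have hmρ : m ≤ ρ := by nlinarith [hp, hρsq, hρpos, hmn]
      exact min_le_iff.mp hmρ
    set M := max |(k : ℝ) - l| |(l : ℝ) - n| with hMdef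
    have hM0 : 0 < M := by
      have : (k:ℝ) ≠ (l:ℝ) := by exact_mod_cast hkl
      exact lt_of_lt_of_le (abs_pos.mpr (sub_ne_zero.mpr this)) (le_max_left _ _)
    have main : ∀ m : ℤ, m ≠ 0 → distToInt ((m:ℝ) * ω) ≤ 2*ρ → |(m:ℝ)| ≤ 2*M →
        C⁻¹ * δ₀ ^ (-(1 : ℝ) / 4) ≤ M := by
      intro m hm hd hle
      have h1' : 1 ≤ m.natAbs := Nat.one_le_iff_ne_zero.mpr (Int.natAbs_ne_zero.mpr hm)
      have hdio' := hdio m.natAbs h1'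
      rw [distToInt_natAbs] at hdio'
      have hna : ((m.natAbs : ℕ) : ℝ) = |(m:ℝ)| := by rw [Nat.cast_natAbs]; push_cast; ring
      have hnapos : (0:ℝ) < ((m.natAbs : ℕ) : ℝ) := by exact_mod_cast h1'
      have e1 : c₀ ≤ 2*ρ * |(m:ℝ)|^2 := by
        rw [div_le_iff₀ (by positivity)] at hdio'
        calc c₀ ≤ distToInt ((m:ℝ) * ω) * ((m.natAbs : ℕ) : ℝ)^2 := hdio'
          _ = distToInt ((m:ℝ) * ω) * |(m:ℝ)|^2 := by rw [hna]
          _ ≤ 2*ρ * |(m:ℝ)|^2 := mul_le_mul_of_nonneg_right hd (by positivity)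
      have e2 : c₀ ≤ 8 * ρ * M^2 := by
        have habs2 : |(m:ℝ)|^2 ≤ (2*M)^2 := by
          have := abs_nonneg (m:ℝ)
          nlinarith [hle]
        nlinarith [e1, hρpos, habs2]
      have e3 : c₀^2 ≤ 64 * (C₁ * δ₀) * M^4 := by
        have h := mul_self_le_mul_self hc₀.le e2
        calc c₀^2 = c₀ * c₀ := sq c₀
          _ ≤ (8 * ρ * M^2) * (8 * ρ * M^2) := h
          _ = 64 * ρ^2 * M^4 := by ring
          _ = 64 * (C₁ * δ₀) * M^4 := by rw [hρsq]
      have key4 : 1 ≤ C^4 * δ₀ * M^4 := by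
        have hC4 : 64 * C₁ / c₀^2 ≤ C^4 := by
          have ha1 : 64 * C₁ / c₀^2 ≤ C := by
            have := le_max_right C₁ (1 + 64 * C₁ / c₀^2)
            linarith
          have ha2 : C ≤ C^4 := le_self_pow₀ (by linarith) (by norm_num)
          linarith
        have hC4' : 64 * C₁ ≤ C^4 * c₀^2 := by
          rw [div_le_iff₀ (by positivity)] at hC4
          linarith
        have t1 : c₀^2 ≤ C^4 * c₀^2 * (δ₀ * M^4) := by
          calc c₀^2 ≤ 64 * (C₁ * δ₀) * M^4 := e3
            _ = 64 * C₁ * (δ₀ * M^4) := by ring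
            _ ≤ C^4 * c₀^2 * (δ₀ * M^4) :=
                mul_le_mul_of_nonneg_right hC4' (by positivity)
        nlinarith [t1, mul_pos hc₀ hc₀]
      have hr : (δ₀ ^ (-(1:ℝ)/4))^(4:ℕ) = δ₀⁻¹ := by
        rw [← Real.rpow_natCast (δ₀ ^ (-(1:ℝ)/4)) 4, ← Real.rpow_mul hδ.le]
        norm_num
        exact Real.rpow_neg_one δ₀
      have hq : (C⁻¹ * δ₀ ^ (-(1:ℝ)/4))^(4:ℕ) ≤ M^4 := by
        rw [mul_pow, hr, inv_pow]
        calc (C^4)⁻¹ * δ₀⁻¹ = 1/(C^4 * δ₀) := by rw [one_div, mul_inv]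
          _ ≤ M^4 := by
              rw [div_le_iff₀ (by positivity)]
              nlinarith [key4]
      exact le_of_pow_le_pow_left₀ (by norm_num) hM0.le hq
    rcases hmin k l hkl h1 h2 with hA|hB
    · apply main (k - l) (sub_ne_zero.mpr hkl)
      · push_cast; linarith [hA]
      · push_cast
        calc |(k:ℝ) - l| ≤ M := le_max_left _ _
          _ ≤ 2*M := by linarith
    · rcases hmin l n hln h2 h3 with hA'|hB'
      · apply main (l - n) (sub_ne_zero.mpr hln)
        · push_cast; linarith [hA']
        · push_cast
          calc |(l:ℝ) - n| ≤ M := le_max_right _ _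
            _ ≤ 2*M := by linarith
      · apply main (k - n) (sub_ne_zero.mpr hkn)
        · push_cast
          have hsplit : ((k:ℝ) - n) * ω =
              (2 * θstar + ((k:ℝ) + l) * ω) + (-(2 * θstar + ((l:ℝ) + n) * ω)) := by ring
          rw [hsplit]
          calc distToInt _ ≤ distToInt (2 * θstar + ((k:ℝ) + l) * ω) +
                distToInt (-(2 * θstar + ((l:ℝ) + n) * ω)) := distToInt_add_le _ _
            _ = distToInt (2 * θstar + ((k:ℝ) + l) * ω) +
                distToInt (2 * θstar + ((l:ℝ) + n) * ω) := by rw [distToInt_neg]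
            _ ≤ 2*ρ := by linarith
        · push_cast
          calc |(k:ℝ) - n| = |((k:ℝ) - l) + ((l:ℝ) - n)| := by ring_nf
            _ ≤ |(k:ℝ) - l| + |(l:ℝ) - n| := abs_add_le _ _
            _ ≤ 2*M := by
                have := le_max_left |(k:ℝ) - l| |(l:ℝ) - n|
                have := le_max_right |(k:ℝ) - l| |(l:ℝ) - n|
                linarith

end
end

section
/- (Lemma on steep lines) Let S ⊂ [0,1) × [0,1) be a Borel set such that for every x ∈ [0,1) the horizontal slice S_x = {ω ∈ [0,1) : (ω, x) ∈ S} is a union of at most M intervals. Then for every positive integer N, the Lebesgue measure of the set {ω ∈ [0,1) : there exists an integer ℓ with N ≤ ℓ ≤ 2N such that (ω, ℓω mod 1) ∈ S} is at most M/N + 8 N^{5/2} |S|^{1/2}, where |S| denotes the two-dimensional Lebesgue measure of S. -/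
set_option maxHeartbeats 1000000

open MeasureTheory
open scoped ENNReal

noncomputable section

namespace SteepLinesAux

open Set

/-- The point of the line with slope `l` and offset `k` at height `x`. -/
def pt (l k : ℕ) (x : ℝ) : ℝ := (x + k) / l

/-- measure of the part of the slice `S_x` within `δ` to the right of the point. -/
def gfun (S : Set (ℝ × ℝ)) (δ : ℝ) (l k : ℕ) (x : ℝ) : ℝ≥0∞ :=
  volume {u : ℝ | (u, x) ∈ S ∧ u ∈ Set.Icc (pt l k x) (pt l k x + δ)}

/-- heights where some other line point is δ-close to the right. -/
def Xone (δ : ℝ) (N l k : ℕ) : Set ℝ :=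
  {x ∈ Ico (0:ℝ) 1 | ∃ l' k' : ℕ, N ≤ l' ∧ l' ≤ 2*N ∧ k' < 2*N ∧ (l', k') ≠ (l, k) ∧
    pt l k x ≤ pt l' k' x ∧ pt l' k' x ≤ pt l k x + δ}

def Wfull (S : Set (ℝ × ℝ)) (l k : ℕ) : Set ℝ :=
  {x ∈ Ico (0:ℝ) 1 | (pt l k x, x) ∈ S}

def Wgood (S : Set (ℝ × ℝ)) (δ : ℝ) (l k : ℕ) : Set ℝ :=
  {x ∈ Wfull S l k | ENNReal.ofReal δ ≤ gfun S δ l k x}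

def Xzero (S : Set (ℝ × ℝ)) (δ : ℝ) (N l k : ℕ) : Set ℝ :=
  {x ∈ Wfull S l k | gfun S δ l k x < ENNReal.ofReal δ} \ Xone δ N l k

lemma measurable_pt (l k : ℕ) : Measurable (pt l k) := by
  unfold pt; fun_prop

lemma measurable_gfun (S : Set (ℝ × ℝ)) (hS : MeasurableSet S) (δ : ℝ) (l k : ℕ) :
    Measurable (gfun S δ l k) := by
  have hT : MeasurableSet {p : ℝ × ℝ | (p.2, p.1) ∈ S ∧
      p.2 ∈ Set.Icc (pt l k p.1) (pt l k p.1 + δ)} := by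
    apply MeasurableSet.inter
    · exact measurable_swap hS
    · apply MeasurableSet.inter
      · exact measurableSet_le ((measurable_pt l k).comp measurable_fst) measurable_snd
      · exact measurableSet_le measurable_snd
          (((measurable_pt l k).comp measurable_fst).add_const δ)
  exact measurable_measure_prodMk_left (ν := volume) hT

lemma measurableSet_Wfull (S : Set (ℝ × ℝ)) (hS : MeasurableSet S) (l k : ℕ) :
    MeasurableSet (Wfull S l k) := by
  apply MeasurableSet.inter measurableSet_Ico
  exact ((measurable_pt l k).prodMk measurable_id) hS

lemma measurableSet_Xone (δ : ℝ) (N l k : ℕ) : MeasurableSet (Xone δ N l k) := by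
  have : Xone δ N l k = Ico (0:ℝ) 1 ∩
      ⋃ (l' : ℕ) (k' : ℕ) (_ : N ≤ l' ∧ l' ≤ 2*N ∧ k' < 2*N ∧ (l', k') ≠ (l, k)),
        {x : ℝ | pt l k x ≤ pt l' k' x ∧ pt l' k' x ≤ pt l k x + δ} := by
    ext x
    constructor
    · rintro ⟨hx, l', k', h1, h2, h3, h4, h5, h6⟩
      exact ⟨hx, Set.mem_iUnion.mpr ⟨l', Set.mem_iUnion.mpr ⟨k',
        Set.mem_iUnion.mpr ⟨⟨h1, h2, h3, h4⟩, h5, h6⟩⟩⟩⟩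
    · rintro ⟨hx, hu⟩
      obtain ⟨l', hrest⟩ := Set.mem_iUnion.mp hu
      obtain ⟨k', hrest⟩ := Set.mem_iUnion.mp hrest
      obtain ⟨⟨h1, h2, h3, h4⟩, h5, h6⟩ := Set.mem_iUnion.mp hrest
      exact ⟨hx, l', k', h1, h2, h3, h4, h5, h6⟩
  rw [this]
  apply MeasurableSet.inter measurableSet_Ico
  apply MeasurableSet.iUnion; intro l'
  apply MeasurableSet.iUnion; intro k'
  apply MeasurableSet.iUnion; intro _
  exact (measurableSet_le (measurable_pt l k) (measurable_pt l' k')).inter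
    (measurableSet_le (measurable_pt l' k') ((measurable_pt l k).add_const δ))

lemma measurableSet_Wgood (S : Set (ℝ × ℝ)) (hS : MeasurableSet S) (δ : ℝ) (l k : ℕ) :
    MeasurableSet (Wgood S δ l k) :=
  (measurableSet_Wfull S hS l k).inter
    ((measurable_gfun S hS δ l k) measurableSet_Ici)

lemma measurableSet_Xzero (S : Set (ℝ × ℝ)) (hS : MeasurableSet S) (δ : ℝ) (N l k : ℕ) :
    MeasurableSet (Xzero S δ N l k) :=
  ((measurableSet_Wfull S hS l k).inter
    ((measurable_gfun S hS δ l k) measurableSet_Iio)).diff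
    (measurableSet_Xone δ N l k)

lemma decompose (S : Set (ℝ × ℝ)) (δ : ℝ) (N l k : ℕ) :
    Wfull S l k ⊆ Wgood S δ l k ∪ Xzero S δ N l k ∪ Xone δ N l k := by
  intro x hx
  by_cases h1 : ENNReal.ofReal δ ≤ gfun S δ l k x
  · exact Or.inl (Or.inl ⟨hx, h1⟩)
  · by_cases h2 : x ∈ Xone δ N l k
    · exact Or.inr h2
    · exact Or.inl (Or.inr ⟨⟨hx, lt_of_not_ge h1⟩, h2⟩)

lemma volume_preimage_affine (l : ℕ) (hl : 0 < l) (k : ℕ) (A : Set ℝ) :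
    volume ((fun ω : ℝ => (l : ℝ) * ω - k) ⁻¹' A) = (l : ℝ≥0∞)⁻¹ * volume A := by
  have hl0 : (l : ℝ) ≠ 0 := Nat.cast_ne_zero.mpr hl.ne'
  have hcomp : (fun ω : ℝ => (l : ℝ) * ω - k) = (fun y : ℝ => y + (-(k:ℝ))) ∘ (fun ω : ℝ => (l:ℝ) * ω) := by
    funext ω; simp [sub_eq_add_neg]
  rw [hcomp, Set.preimage_comp]
  rw [Real.volume_preimage_mul_left hl0]
  rw [measure_preimage_add_right volume (-(k:ℝ)) A]
  congr 1
  rw [abs_of_nonneg (by positivity : (0:ℝ) ≤ (l:ℝ)⁻¹)]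
  rw [ENNReal.ofReal_inv_of_pos (by positivity), ENNReal.ofReal_natCast]


lemma cover (S : Set (ℝ × ℝ)) (N : ℕ) (hN : 0 < N) :
    {ω ∈ Set.Ico (0 : ℝ) 1 |
        ∃ l : ℕ, N ≤ l ∧ l ≤ 2 * N ∧ (ω, Int.fract (l * ω)) ∈ S} ⊆
      ⋃ l ∈ Finset.Icc N (2*N), ⋃ k ∈ Finset.range l,
        (fun ω : ℝ => (l : ℝ) * ω - k) ⁻¹' (Wfull S l k) := by
  rintro ω ⟨hω, l, hl1, hl2, hS⟩
  have hlpos : 0 < l := lt_of_lt_of_le hN hl1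
  have hl0 : (0:ℝ) < (l:ℝ) := by exact_mod_cast hlpos
  have h0 : (0:ℝ) ≤ (l:ℝ) * ω := mul_nonneg hl0.le hω.1
  have h1 : (l:ℝ) * ω < l := by
    calc (l:ℝ) * ω < l * 1 := by exact mul_lt_mul_of_pos_left hω.2 hl0
    _ = l := mul_one _
  set k : ℕ := (⌊(l:ℝ) * ω⌋).toNat with hk
  have hfloor0 : (0:ℤ) ≤ ⌊(l:ℝ) * ω⌋ := Int.floor_nonneg.mpr h0
  have hkcast : (k : ℝ) = (⌊(l:ℝ) * ω⌋ : ℝ) := by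
    rw [hk]; exact_mod_cast congrArg (Int.cast : ℤ → ℝ) (Int.toNat_of_nonneg hfloor0)
  have hkl : k < l := by
    have : ⌊(l:ℝ) * ω⌋ < (l:ℤ) := Int.floor_lt.mpr (by exact_mod_cast h1)
    omega
  refine Set.mem_biUnion (Finset.mem_Icc.mpr ⟨hl1, hl2⟩) ?_
  refine Set.mem_biUnion (Finset.mem_range.mpr hkl) ?_
  show (l:ℝ) * ω - k ∈ Wfull S l k
  have hxeq : (l:ℝ) * ω - k = Int.fract ((l:ℝ) * ω) := by
    rw [hkcast, Int.fract]
  constructor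
  · rw [hxeq]
    exact ⟨Int.fract_nonneg _, Int.fract_lt_one _⟩
  · show (pt l k ((l:ℝ)*ω - k), (l:ℝ)*ω - k) ∈ S
    have hpt : pt l k ((l:ℝ)*ω - k) = ω := by
      unfold pt
      field_simp; ring
    rw [hpt, hxeq]
    exact_mod_cast hS


lemma hole_exists (S : Set (ℝ × ℝ)) (δ : ℝ) (l k : ℕ) (x : ℝ)
    (h : gfun S δ l k x < ENNReal.ofReal δ) :
    ∃ u, u ∈ Ioc (pt l k x) (pt l k x + δ) ∧ (u, x) ∉ S := by
  by_contra hcon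
  push_neg at hcon
  have hsub : Ioc (pt l k x) (pt l k x + δ) ⊆
      {u : ℝ | (u, x) ∈ S ∧ u ∈ Set.Icc (pt l k x) (pt l k x + δ)} := by
    intro u hu
    exact ⟨hcon u hu, Ioc_subset_Icc_self hu⟩
  have : ENNReal.ofReal δ ≤ gfun S δ l k x := by
    have h2 := measure_mono (μ := (volume : Measure ℝ)) hsub
    rw [Real.volume_Ioc, add_sub_cancel_left] at h2
    exact h2
  exact absurd this (not_le.mpr h)

/-- Key combinatorial count: at each height at most `M` pairs are in `Xzero`. -/
lemma count_bound (S : Set (ℝ × ℝ)) (δ : ℝ) (M N : ℕ) (hM : 1 ≤ M)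
    (hslice : ∀ x ∈ Set.Ico (0 : ℝ) 1,
      ∃ I : Fin M → Set ℝ, (∀ i, (I i).OrdConnected) ∧
        {ω : ℝ | (ω, x) ∈ S} = ⋃ i : Fin M, I i)
    (x : ℝ) (hx : x ∈ Ico (0:ℝ) 1) :
    ∑ l ∈ Finset.Icc N (2*N), ∑ k ∈ Finset.range (2*N),
      (Xzero S δ N l k).indicator (fun _ => (1 : ℝ≥0∞)) x ≤ M := by
  classical
  obtain ⟨I, hIconn, hIunion⟩ := hslice x hx
  set Q : Finset (ℕ × ℕ) := Finset.Icc N (2*N) ×ˢ Finset.range (2*N) with hQ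
  set F : Finset (ℕ × ℕ) := Q.filter (fun q => x ∈ Xzero S δ N q.1 q.2) with hF
  have hsum : ∑ l ∈ Finset.Icc N (2*N), ∑ k ∈ Finset.range (2*N),
      (Xzero S δ N l k).indicator (fun _ => (1 : ℝ≥0∞)) x = (F.card : ℝ≥0∞) := by
    rw [← Finset.sum_product']
    have : ∀ q ∈ Q, (Xzero S δ N q.1 q.2).indicator (fun _ => (1 : ℝ≥0∞)) x
        = if x ∈ Xzero S δ N q.1 q.2 then (1:ℝ≥0∞) else 0 := by
      intro q _; rw [Set.indicator_apply]
    rw [Finset.sum_congr rfl this, ← Finset.sum_filter, ← hF, Finset.sum_const]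
    simp
  rw [hsum]
  rw [Nat.cast_le (α := ℝ≥0∞)]
  -- injection into Fin M
  set f : ℕ × ℕ → Fin M := fun q =>
    if h : pt q.1 q.2 x ∈ ⋃ i, I i then (Set.mem_iUnion.mp h).choose else ⟨0, hM⟩ with hf
  have hmemS : ∀ q ∈ F, (pt q.1 q.2 x, x) ∈ S := by
    intro q hq
    have := (Finset.mem_filter.mp hq).2
    exact this.1.1.2
  have hfmem : ∀ q ∈ F, pt q.1 q.2 x ∈ I (f q) := by
    intro q hq
    have h : pt q.1 q.2 x ∈ ⋃ i, I i := by
      rw [← hIunion]; exact hmemS q hq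
    simp only [hf, dif_pos h]
    exact (Set.mem_iUnion.mp h).choose_spec
  have hinj : Set.InjOn f F := by
    intro q hq q' hq' hfeq
    by_contra hne
    have hmq := Finset.mem_filter.mp hq
    have hmq' := Finset.mem_filter.mp hq'
    obtain ⟨hqQ, hq0⟩ := hmq
    obtain ⟨hq'Q, hq'0⟩ := hmq'
    have hb := Finset.mem_product.mp hqQ
    have hb' := Finset.mem_product.mp hq'Q
    have hl := Finset.mem_Icc.mp hb.1
    have hl' := Finset.mem_Icc.mp hb'.1
    have hk := Finset.mem_range.mp hb.2
    have hk' := Finset.mem_range.mp hb'.2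
    have hnot : x ∉ Xone δ N q.1 q.2 := hq0.2
    have hnot' : x ∉ Xone δ N q'.1 q'.2 := hq'0.2
    have hg : gfun S δ q.1 q.2 x < ENNReal.ofReal δ := hq0.1.2
    have hg' : gfun S δ q'.1 q'.2 x < ENNReal.ofReal δ := hq'0.1.2
    have key : ∀ a b : ℕ × ℕ, a ∈ F → b ∈ F → a ≠ b → f a = f b →
        pt a.1 a.2 x ≤ pt b.1 b.2 x →
        gfun S δ a.1 a.2 x < ENNReal.ofReal δ →
        x ∉ Xone δ N a.1 a.2 → False := by
      intro a b haF hbF hab hfab hle hga hnota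
      have hbQ := Finset.mem_product.mp (Finset.mem_filter.mp hbF).1
      have hbl := Finset.mem_Icc.mp hbQ.1
      have hbk := Finset.mem_range.mp hbQ.2
      have hgt : pt a.1 a.2 x + δ < pt b.1 b.2 x := by
        by_contra hcon
        push_neg at hcon
        exact hnota ⟨hx, b.1, b.2, hbl.1, hbl.2, hbk, by
          simpa [Prod.ext_iff] using (Ne.symm hab), hle, hcon⟩
      obtain ⟨u, hu, huS⟩ := hole_exists S δ a.1 a.2 x hga
      have huI : u ∈ I (f a) := by
        apply (hIconn (f a)).out (hfmem a haF) (by rw [hfab]; exact hfmem b hbF)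
        exact ⟨hu.1.le, hu.2.trans hgt.le⟩
      have : u ∈ ⋃ i, I i := Set.mem_iUnion.mpr ⟨f a, huI⟩
      rw [← hIunion] at this
      exact huS this
    rcases le_total (pt q.1 q.2 x) (pt q'.1 q'.2 x) with hle | hle
    · exact key q q' hq hq' hne hfeq hle hg hnot
    · exact key q' q hq' hq (Ne.symm hne) hfeq.symm hle hg' hnot'
  calc F.card ≤ (Finset.univ : Finset (Fin M)).card :=
        Finset.card_le_card_of_injOn f (fun a _ => Finset.mem_univ _) hinj
    _ = M := by simp

lemma slice_lintegral (S : Set (ℝ × ℝ)) (hS : MeasurableSet S) :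
    ∫⁻ x, volume {u : ℝ | (u, x) ∈ S} = volume S := by
  exact (Measure.prod_apply_symm hS).symm

lemma good_bound (S : Set (ℝ × ℝ)) (hS : MeasurableSet S) (δ : ℝ) (hδ0 : 0 < δ)
    (N : ℕ) (hN : 0 < N) (hδ : δ ≤ 1/(4*N)) (l : ℕ) (hl1 : N ≤ l) (hl2 : l ≤ 2*N) :
    ∑ k ∈ Finset.range l, volume (Wgood S δ l k) ≤ (ENNReal.ofReal δ)⁻¹ * volume S := by
  have hε0 : ENNReal.ofReal δ ≠ 0 := by simp [hδ0]
  have hεtop : ENNReal.ofReal δ ≠ ⊤ := ENNReal.ofReal_ne_top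
  have hlpos : 0 < l := lt_of_lt_of_le hN hl1
  have hlr : (0:ℝ) < l := by exact_mod_cast hlpos
  have hδl : δ < 1/l := by
    apply lt_of_le_of_lt hδ
    apply one_div_lt_one_div_of_lt hlr
    have h1 : (0:ℝ) < N := by exact_mod_cast hN
    have h2 : (l:ℝ) ≤ 2*N := by exact_mod_cast hl2
    nlinarith
  -- step 2: per-k Markov
  have step2 : ∀ k : ℕ, volume (Wgood S δ l k) ≤
      (∫⁻ x in Ico (0:ℝ) 1, gfun S δ l k x) / ENNReal.ofReal δ := by
    intro k
    have hsub : Wgood S δ l k ⊆ {x : ℝ | ENNReal.ofReal δ ≤ gfun S δ l k x} ∩ Ico 0 1 := by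
      rintro x ⟨⟨hx1, _⟩, hx3⟩
      exact ⟨hx3, hx1⟩
    calc volume (Wgood S δ l k) ≤ volume ({x : ℝ | ENNReal.ofReal δ ≤ gfun S δ l k x} ∩ Ico 0 1) :=
          measure_mono hsub
      _ = (volume.restrict (Ico (0:ℝ) 1)) {x : ℝ | ENNReal.ofReal δ ≤ gfun S δ l k x} := by
          exact (Measure.restrict_apply ((measurable_gfun S hS δ l k) measurableSet_Ici)).symm
      _ ≤ (∫⁻ x in Ico (0:ℝ) 1, gfun S δ l k x) / ENNReal.ofReal δ :=
          meas_ge_le_lintegral_div (measurable_gfun S hS δ l k).aemeasurable hε0 hεtop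
  -- pointwise disjointness sum
  have pointwise : ∀ x : ℝ, ∑ k ∈ Finset.range l, gfun S δ l k x ≤
      volume {u : ℝ | (u, x) ∈ S} := by
    intro x
    set U : ℕ → Set ℝ := fun k =>
      {u : ℝ | (u, x) ∈ S ∧ u ∈ Set.Icc (pt l k x) (pt l k x + δ)} with hU
    have hmeas : ∀ k, MeasurableSet (U k) := by
      intro k
      exact ((measurable_id.prodMk measurable_const) hS).inter measurableSet_Icc
    have horder : ∀ k k' : ℕ, k < k' → pt l k x + δ < pt l k' x := by
      intro k k' hkk'
      have h1 : pt l k' x - pt l k x = ((k':ℝ) - k)/l := by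
        unfold pt; field_simp; ring
      have h2 : (1:ℝ) ≤ (k':ℝ) - k := by
        have : (k:ℝ) + 1 ≤ k' := by exact_mod_cast hkk'
        linarith
      have : (1:ℝ)/l ≤ pt l k' x - pt l k x := by
        rw [h1]
        gcongr
      linarith [hδl]
    have hd : (↑(Finset.range l) : Set ℕ).PairwiseDisjoint U := by
      intro k _ k' _ hne
      rcases lt_or_gt_of_ne hne with h | h
      · apply Set.disjoint_left.mpr
        rintro u ⟨_, _, hu2⟩ ⟨_, hu3, _⟩
        linarith [horder k k' h]
      · apply Set.disjoint_left.mpr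
        rintro u ⟨_, hu2, _⟩ ⟨_, _, hu3⟩
        linarith [horder k' k h]
    have : ∑ k ∈ Finset.range l, gfun S δ l k x = volume (⋃ k ∈ Finset.range l, U k) :=
      (measure_biUnion_finset hd (fun k _ => hmeas k)).symm
    rw [this]
    apply measure_mono
    intro u hu
    simp only [Set.mem_iUnion] at hu
    obtain ⟨k, _, hk2, _⟩ := hu
    exact hk2
  -- assemble
  calc ∑ k ∈ Finset.range l, volume (Wgood S δ l k)
      ≤ ∑ k ∈ Finset.range l, (∫⁻ x in Ico (0:ℝ) 1, gfun S δ l k x) / ENNReal.ofReal δ :=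
        Finset.sum_le_sum (fun k _ => step2 k)
    _ = (∑ k ∈ Finset.range l, ∫⁻ x in Ico (0:ℝ) 1, gfun S δ l k x) / ENNReal.ofReal δ := by
        rw [ENNReal.div_eq_inv_mul]
        rw [Finset.mul_sum]
        simp [ENNReal.div_eq_inv_mul]
    _ = (∫⁻ x in Ico (0:ℝ) 1, ∑ k ∈ Finset.range l, gfun S δ l k x) / ENNReal.ofReal δ := by
        rw [MeasureTheory.lintegral_finset_sum]
        intro k _
        exact measurable_gfun S hS δ l k
    _ ≤ (∫⁻ x in Ico (0:ℝ) 1, volume {u : ℝ | (u, x) ∈ S}) / ENNReal.ofReal δ := by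
        apply ENNReal.div_le_div_right
        exact lintegral_mono pointwise
    _ ≤ (∫⁻ x, volume {u : ℝ | (u, x) ∈ S}) / ENNReal.ofReal δ := by
        apply ENNReal.div_le_div_right
        exact setLIntegral_le_lintegral _ _
    _ = volume S / ENNReal.ofReal δ := by rw [slice_lintegral S hS]
    _ = (ENNReal.ofReal δ)⁻¹ * volume S := by rw [ENNReal.div_eq_inv_mul]

lemma band_volume (c A B : ℝ) (hc : c ≠ 0) :
    volume {x : ℝ | A ≤ c*x ∧ c*x ≤ B} ≤ ENNReal.ofReal ((B - A)/|c|) := by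
  rcases lt_or_gt_of_ne hc with hneg | hpos
  · have hsub : {x : ℝ | A ≤ c*x ∧ c*x ≤ B} ⊆ Icc (B/c) (A/c) := by
      rintro x ⟨h1, h2⟩
      constructor
      · rw [div_le_iff_of_neg hneg]; linarith [mul_comm c x]
      · rw [le_div_iff_of_neg hneg]; linarith [mul_comm c x]
    calc volume {x : ℝ | A ≤ c*x ∧ c*x ≤ B} ≤ volume (Icc (B/c) (A/c)) := measure_mono hsub
      _ = ENNReal.ofReal (A/c - B/c) := Real.volume_Icc
      _ = ENNReal.ofReal ((B - A)/|c|) := by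
          have hc' : -c ≠ 0 := by simpa using hc
          have heq : (B - A)/(-c) = A/c - B/c := by
            field_simp
            ring
          rw [abs_of_neg hneg, heq]
  · have hsub : {x : ℝ | A ≤ c*x ∧ c*x ≤ B} ⊆ Icc (A/c) (B/c) := by
      rintro x ⟨h1, h2⟩
      constructor
      · rw [div_le_iff₀ hpos]; linarith [mul_comm c x]
      · rw [le_div_iff₀ hpos]; linarith [mul_comm c x]
    calc volume {x : ℝ | A ≤ c*x ∧ c*x ≤ B} ≤ volume (Icc (A/c) (B/c)) := measure_mono hsub
      _ = ENNReal.ofReal (B/c - A/c) := Real.volume_Icc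
      _ = ENNReal.ofReal ((B - A)/|c|) := by
          rw [abs_of_pos hpos]
          congr 1
          rw [sub_div]

lemma xone_bound (δ : ℝ) (hδ0 : 0 < δ) (N : ℕ) (hN : 0 < N)
    (hδ : δ ≤ 1/(4*N)) (l k : ℕ) (hl1 : N ≤ l) (hl2 : l ≤ 2*N) :
    volume (Xone δ N l k) ≤ (N+1 : ℝ≥0∞) * ENNReal.ofReal (8*δ*N^2) := by
  classical
  have hNr : (1:ℝ) ≤ N := by exact_mod_cast hN
  have hlr : (0:ℝ) < l := by exact_mod_cast lt_of_lt_of_le hN hl1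
  have hl2r : (l:ℝ) ≤ 2*N := by exact_mod_cast hl2
  have hδl : δ < 1/l := by
    apply lt_of_le_of_lt hδ
    apply one_div_lt_one_div_of_lt hlr
    nlinarith
  set Y : ℕ → ℕ → Set ℝ := fun l' k' =>
    {x ∈ Ico (0:ℝ) 1 | pt l k x ≤ pt l' k' x ∧ pt l' k' x ≤ pt l k x + δ} with hY
  -- cover
  have hcover : Xone δ N l k ⊆
      ⋃ l' ∈ Finset.Icc N (2*N),
        ⋃ k' ∈ (Finset.range (2*N)).filter (fun k' => (l', k') ≠ (l, k)), Y l' k' := by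
    rintro x ⟨hx, l', k', h1, h2, h3, h4, h5, h6⟩
    refine Set.mem_biUnion (Finset.mem_Icc.mpr ⟨h1, h2⟩) ?_
    refine Set.mem_biUnion (Finset.mem_filter.mpr ⟨Finset.mem_range.mpr h3, h4⟩) ?_
    exact ⟨hx, h5, h6⟩
  have hmain : ∀ l' ∈ Finset.Icc N (2*N),
      volume (⋃ k' ∈ (Finset.range (2*N)).filter (fun k' => (l', k') ≠ (l, k)), Y l' k')
        ≤ ENNReal.ofReal (8*δ*N^2) := by
    intro l' hl'
    have hl'b := Finset.mem_Icc.mp hl'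
    have hl'r : (0:ℝ) < l' := by exact_mod_cast lt_of_lt_of_le hN hl'b.1
    have hl'2r : (l':ℝ) ≤ 2*N := by exact_mod_cast hl'b.2
    by_cases hll' : l' = l
    · -- empty union
      subst hll'
      have hempty : ∀ k' ∈ (Finset.range (2*N)).filter (fun k' => (l', k') ≠ (l', k)),
          Y l' k' = ∅ := by
        intro k' hk'
        have hk'ne : k' ≠ k := by
          have := (Finset.mem_filter.mp hk').2
          simpa using this
        ext x
        simp only [hY, Set.mem_sep_iff, Set.mem_empty_iff_false, iff_false, not_and]
        intro _ h5 h6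
        have hdiff : pt l' k' x - pt l' k x = ((k':ℝ) - k)/l' := by
          unfold pt; field_simp; ring
        rcases lt_or_gt_of_ne hk'ne with h | h
        · have : ((k':ℝ) - k) ≤ -1 := by
            have : (k':ℝ) + 1 ≤ k := by exact_mod_cast h
            linarith
          have : pt l' k' x - pt l' k x < 0 := by
            rw [hdiff]
            apply div_neg_of_neg_of_pos (by linarith) hl'r
          linarith
        · have h1' : (1:ℝ) ≤ ((k':ℝ) - k) := by
            have : (k:ℝ) + 1 ≤ k' := by exact_mod_cast h
            linarith
          have : (1:ℝ)/l' ≤ pt l' k' x - pt l' k x := by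
            rw [hdiff]; gcongr
          have hδl' : δ < 1/l' := by
            apply lt_of_le_of_lt hδ
            apply one_div_lt_one_div_of_lt hl'r
            nlinarith
          linarith
      calc volume (⋃ k' ∈ (Finset.range (2*N)).filter (fun k' => (l', k') ≠ (l', k)), Y l' k')
          ≤ ∑ k' ∈ (Finset.range (2*N)).filter (fun k' => (l', k') ≠ (l', k)),
              volume (Y l' k') := measure_biUnion_finset_le _ _
        _ = 0 := Finset.sum_eq_zero (fun k' hk' => by rw [hempty k' hk', measure_empty])
        _ ≤ ENNReal.ofReal (8*δ*N^2) := zero_le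
    · -- main case
      set c : ℝ := (l:ℝ) - l' with hc
      have hcne : c ≠ 0 := by
        have : (l:ℝ) ≠ l' := by exact_mod_cast (Ne.symm hll')
        simpa [hc, sub_ne_zero] using this
      have hdR1 : (1:ℝ) ≤ |c| := by
        have h1 : ((l:ℤ) - l') ≠ 0 := by
          have : (l:ℤ) ≠ l' := by exact_mod_cast (Ne.symm hll')
          omega
        have h2 : (1:ℤ) ≤ |(l:ℤ) - l'| := Int.one_le_abs h1
        have : ((1:ℤ):ℝ) ≤ (|(l:ℤ) - l'| : ℝ) := by exact_mod_cast h2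
        simpa [hc] using this
      set D : ℝ := δ * l * l' with hD
      have hD0 : 0 < D := by positivity
      set m : ℕ → ℝ := fun k' => (l:ℝ) * k' - (l':ℝ) * k with hm
      -- band inclusion
      have hband : ∀ k' : ℕ, Y l' k' ⊆ {x : ℝ | -(m k') ≤ c*x ∧ c*x ≤ -(m k') + D} := by
        intro k' x hx
        obtain ⟨hx01, h5, h6⟩ := hx
        unfold pt at h5 h6
        have e5 : (l':ℝ) * (x + k) ≤ l * (x + k') := by
          rw [div_le_div_iff₀ hlr hl'r] at h5
          linarith [h5]
        have e6 : (l:ℝ) * (x + k') ≤ l' * (x + k) + D := by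
          have := h6
          rw [div_le_iff₀ hl'r] at this
          have h7 : ((x + k)/l + δ) * l' = (x+k)*l'/l + δ*l' := by field_simp
          rw [h7] at this
          have h8 : (x + (k':ℝ)) ≤ (x+k)*l'/l + δ*l' := this
          have h9 : (x + (k':ℝ)) * l ≤ ((x+k)*l'/l + δ*l') * l := by
            apply mul_le_mul_of_nonneg_right h8 hlr.le
          have h10 : ((x+k)*l'/l + δ*l') * l = (x+k)*l' + δ*l'*l := by
            field_simp
          rw [h10] at h9
          rw [hD]
          nlinarith [h9]
        constructor
        · have : 0 ≤ (l:ℝ)*(x+k') - l'*(x+k) := by linarith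
          have expand : (l:ℝ)*(x+k') - l'*(x+k) = c*x + m k' := by
            rw [hc, hm]; ring
          rw [expand] at this
          linarith
        · have : (l:ℝ)*(x+k') - l'*(x+k) ≤ D := by linarith
          have expand : (l:ℝ)*(x+k') - l'*(x+k) = c*x + m k' := by
            rw [hc, hm]; ring
          rw [expand] at this
          linarith
      have hYvol : ∀ k' : ℕ, volume (Y l' k') ≤ ENNReal.ofReal (D/|c|) := by
        intro k'
        calc volume (Y l' k') ≤ volume {x : ℝ | -(m k') ≤ c*x ∧ c*x ≤ -(m k') + D} :=
              measure_mono (hband k')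
          _ ≤ ENNReal.ofReal ((-(m k') + D - -(m k'))/|c|) := band_volume c _ _ hcne
          _ = ENNReal.ofReal (D/|c|) := by norm_num
      -- constraint on nonempty Y
      have hconstraint : ∀ k' : ℕ, (Y l' k').Nonempty →
          -(max c 0) ≤ m k' ∧ m k' ≤ D + max (-c) 0 := by
        intro k' ⟨x, hx⟩
        have hb := hband k' hx
        obtain ⟨hx01, _, _⟩ := hx
        have hcx1 : c * x ≤ max c 0 := by
          rcases le_or_gt 0 c with h | h
          · calc c * x ≤ c * 1 := by nlinarith [hx01.2]
              _ = c := mul_one c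
              _ ≤ max c 0 := le_max_left c 0
          · calc c * x ≤ 0 := by nlinarith [hx01.1]
              _ ≤ max c 0 := le_max_right c 0
        have hcx2 : -(c * x) ≤ max (-c) 0 := by
          rcases le_or_gt 0 c with h | h
          · calc -(c*x) ≤ 0 := by nlinarith [hx01.1]
              _ ≤ max (-c) 0 := le_max_right _ 0
          · calc -(c*x) = (-c) * x := by ring
              _ ≤ (-c) * 1 := by nlinarith [hx01.2]
              _ = -c := mul_one _
              _ ≤ max (-c) 0 := le_max_left _ 0
        constructor
        · linarith [hb.1]
        · linarith [hb.2]
      -- the finset of nonempty indices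
      set T : Finset ℕ := (Finset.range (2*N)).filter (fun k' => (Y l' k').Nonempty) with hT
      have hsum1 : ∑ k' ∈ (Finset.range (2*N)).filter (fun k' => (l', k') ≠ (l, k)),
          volume (Y l' k') ≤ ∑ k' ∈ T, volume (Y l' k') := by
        apply Finset.sum_le_sum_of_ne_zero
        intro k' hk' hne
        rw [hT, Finset.mem_filter]
        refine ⟨Finset.mem_of_mem_filter k' hk', ?_⟩
        by_contra hcon
        rw [Set.not_nonempty_iff_eq_empty] at hcon
        rw [hcon] at hne
        simp at hne
      have hcard : (T.card : ℝ) ≤ (|c| + D)/l + 1 := by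
        rcases Finset.eq_empty_or_nonempty T with hTe | hTne
        · rw [hTe]
          simp
          positivity
        · set a := T.min' hTne with ha
          set b := T.max' hTne with hb
          have hab : a ≤ b := T.min'_le b (T.max'_mem hTne)
          have hTsub : T ⊆ Finset.Icc a b := by
            intro t ht
            exact Finset.mem_Icc.mpr ⟨T.min'_le t ht, T.le_max' t ht⟩
          have hcard1 : T.card ≤ b - a + 1 := by
            calc T.card ≤ (Finset.Icc a b).card := Finset.card_le_card hTsub
              _ = b + 1 - a := Nat.card_Icc a b
              _ = b - a + 1 := by omega
          have hma := hconstraint a (Finset.mem_filter.mp (T.min'_mem hTne)).2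
          have hmb := hconstraint b (Finset.mem_filter.mp (T.max'_mem hTne)).2
          have hmdiff : m b - m a = (l:ℝ) * ((b:ℝ) - a) := by
            rw [hm]; push_cast; ring
          have habs : max c 0 + max (-c) 0 = |c| := by
            rcases le_total c 0 with h | h
            · rw [max_eq_right h, max_eq_left (by linarith), abs_of_nonpos h]; ring
            · rw [max_eq_left h, max_eq_right (by linarith), abs_of_nonneg h]
              ring
          have hlba : (l:ℝ) * ((b:ℝ) - a) ≤ D + |c| := by
            rw [← hmdiff]
            have := hma.1
            have := hmb.2
            linarith [habs]
          have hba : (b:ℝ) - a ≤ (D + |c|)/l := by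
            rw [le_div_iff₀ hlr]
            linarith [hlba]
          calc (T.card : ℝ) ≤ ((b - a + 1 : ℕ) : ℝ) := by exact_mod_cast hcard1
            _ = ((b:ℝ) - a) + 1 := by
                have : ((b - a : ℕ) : ℝ) = (b:ℝ) - a := by
                  rw [Nat.cast_sub hab]
                push_cast [Nat.cast_sub hab]
                ring
            _ ≤ (D + |c|)/l + 1 := by linarith [hba]
            _ = (|c| + D)/l + 1 := by rw [add_comm D]
      -- put together
      have halg : ((|c| + D)/l + 1) * (D/|c|) ≤ 8*δ*N^2 := by
        have hq0 : 0 ≤ D/|c| := by positivity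
        have habs0 : (0:ℝ) < |c| := by linarith
        have hll4 : (l:ℝ) * l' ≤ (2*N) * (2*N) := by
          apply mul_le_mul hl2r hl'2r hl'r.le (by positivity)
        have hq4 : D/|c| ≤ 4*δ*N^2 := by
          calc D/|c| ≤ D := div_le_self hD0.le hdR1
            _ ≤ 4*δ*N^2 := by
                rw [hD]
                nlinarith [mul_le_mul_of_nonneg_left hll4 hδ0.le]
        have hdl' : δ * l' ≤ 1/2 := by
          have h4N : (0:ℝ) < 4*N := by positivity
          have : δ * l' ≤ (1/(4*N)) * (2*N) := by
            apply mul_le_mul hδ hl'2r hl'r.le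
            positivity
          calc δ * l' ≤ (1/(4*N)) * (2*N) := this
            _ = 1/2 := by field_simp; ring
        have hDl : D/l = δ * l' := by
          rw [hD]; field_simp
        have expand : ((|c| + D)/l + 1) * (D/|c|)
            = (|c| * (D/|c|))/l + (D/l) * (D/|c|) + D/|c| := by
          field_simp
        rw [expand]
        have h1 : |c| * (D/|c|) = D := by field_simp
        rw [h1, hDl]
        have hDll : δ * (l':ℝ) ≤ 2*δ*N^2 := by
          have h1 : δ * (l':ℝ) ≤ δ*(2*N) := by nlinarith
          have h2 : δ*(2*(N:ℝ)) ≤ 2*δ*N^2 := by nlinarith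
          linarith
        nlinarith [hq0, hq4, hdl', hDll, hD0]
      calc volume (⋃ k' ∈ (Finset.range (2*N)).filter (fun k' => (l', k') ≠ (l, k)), Y l' k')
          ≤ ∑ k' ∈ (Finset.range (2*N)).filter (fun k' => (l', k') ≠ (l, k)), volume (Y l' k') :=
            measure_biUnion_finset_le _ _
        _ ≤ ∑ k' ∈ T, volume (Y l' k') := hsum1
        _ ≤ T.card • ENNReal.ofReal (D/|c|) := Finset.sum_le_card_nsmul T _ _ (fun k' _ => hYvol k')
        _ = (T.card : ℝ≥0∞) * ENNReal.ofReal (D/|c|) := by rw [nsmul_eq_mul]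
        _ = ENNReal.ofReal ((T.card : ℝ) * (D/|c|)) := by
            rw [ENNReal.ofReal_mul (by positivity)]
            congr 1
            simp
        _ ≤ ENNReal.ofReal (((|c| + D)/l + 1) * (D/|c|)) := by
            apply ENNReal.ofReal_le_ofReal
            apply mul_le_mul_of_nonneg_right hcard
            positivity
        _ ≤ ENNReal.ofReal (8*δ*N^2) := ENNReal.ofReal_le_ofReal halg
  calc volume (Xone δ N l k)
      ≤ volume (⋃ l' ∈ Finset.Icc N (2*N),
          ⋃ k' ∈ (Finset.range (2*N)).filter (fun k' => (l', k') ≠ (l, k)), Y l' k') :=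
        measure_mono hcover
    _ ≤ ∑ l' ∈ Finset.Icc N (2*N),
          volume (⋃ k' ∈ (Finset.range (2*N)).filter (fun k' => (l', k') ≠ (l, k)), Y l' k') :=
        measure_biUnion_finset_le _ _
    _ ≤ ∑ l' ∈ Finset.Icc N (2*N), ENNReal.ofReal (8*δ*N^2) := Finset.sum_le_sum hmain
    _ = ((Finset.Icc N (2*N)).card : ℝ≥0∞) * ENNReal.ofReal (8*δ*N^2) := by
        rw [Finset.sum_const, nsmul_eq_mul]
    _ = (N+1 : ℝ≥0∞) * ENNReal.ofReal (8*δ*N^2) := by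
        rw [Nat.card_Icc]
        congr 1
        rw [show 2*N + 1 - N = N + 1 from by omega]
        push_cast
        ring

lemma ennreal_ofReal_prod3 (a b c : ℝ) (ha : 0 ≤ a) (hb : 0 ≤ b) (hc : 0 ≤ c) :
    ENNReal.ofReal a * ENNReal.ofReal b * ENNReal.ofReal c = ENNReal.ofReal (a * b * c) := by
  rw [← ENNReal.ofReal_mul ha, ← ENNReal.ofReal_mul (by positivity)]

lemma master (S : Set (ℝ × ℝ)) (hS : MeasurableSet S)
    (hSsub : S ⊆ Set.Ico (0 : ℝ) 1 ×ˢ Set.Ico (0 : ℝ) 1)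
    (M N : ℕ) (hN : 0 < N) (hM : 1 ≤ M)
    (hslice : ∀ x ∈ Set.Ico (0 : ℝ) 1,
      ∃ I : Fin M → Set ℝ, (∀ i, (I i).OrdConnected) ∧
        {ω : ℝ | (ω, x) ∈ S} = ⋃ i : Fin M, I i)
    (δ : ℝ) (hδ0 : 0 < δ) (hδ : δ ≤ 1/(4*N)) :
    volume {ω ∈ Set.Ico (0 : ℝ) 1 |
        ∃ l : ℕ, N ≤ l ∧ l ≤ 2 * N ∧ (ω, Int.fract (l * ω)) ∈ S}
      ≤ ENNReal.ofReal ((M : ℝ) / N)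
        + ENNReal.ofReal (((N:ℝ)+1)/N * ((volume S).toReal / δ))
        + ENNReal.ofReal (8*δ*(N:ℝ)^2*((N:ℝ)+1)^2) := by
  classical
  have hNr : (0:ℝ) < N := by exact_mod_cast hN
  have hε0 : ENNReal.ofReal δ ≠ 0 := by simp [hδ0]
  have hSfin : volume S ≠ ⊤ := by
    have h1 : volume S ≤ volume (Set.Ico (0:ℝ) 1 ×ˢ Set.Ico (0:ℝ) 1) := measure_mono hSsub
    have h2 : volume (Set.Ico (0:ℝ) 1 ×ˢ Set.Ico (0:ℝ) 1) = 1 := by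
      rw [Measure.volume_eq_prod, Measure.prod_prod, Real.volume_Ico]
      norm_num
    rw [h2] at h1
    exact (h1.trans_lt ENNReal.one_lt_top).ne
  have hvolS : volume S = ENNReal.ofReal ((volume S).toReal) := (ENNReal.ofReal_toReal hSfin).symm
  set s : ℝ := (volume S).toReal with hs
  have hsnn : 0 ≤ s := ENNReal.toReal_nonneg
  have hNinv : (N:ℝ≥0∞)⁻¹ = ENNReal.ofReal ((N:ℝ)⁻¹) := by
    rw [ENNReal.ofReal_inv_of_pos hNr, ENNReal.ofReal_natCast]
  have hδinv : (ENNReal.ofReal δ)⁻¹ = ENNReal.ofReal (δ⁻¹) := (ENNReal.ofReal_inv_of_pos hδ0).symm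
  have hNcast : ((N+1:ℕ):ℝ≥0∞) = ENNReal.ofReal ((N:ℝ)+1) := by
    rw [show ((N:ℝ)+1) = ((N+1:ℕ):ℝ) by push_cast; ring, ENNReal.ofReal_natCast]
  -- step 1 : covering bound
  have step1 : volume {ω ∈ Set.Ico (0 : ℝ) 1 |
        ∃ l : ℕ, N ≤ l ∧ l ≤ 2 * N ∧ (ω, Int.fract (l * ω)) ∈ S}
      ≤ ∑ l ∈ Finset.Icc N (2*N), ∑ k ∈ Finset.range l,
          ((l : ℝ≥0∞)⁻¹ * volume (Wgood S δ l k) + (l : ℝ≥0∞)⁻¹ * volume (Xzero S δ N l k)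
            + (l : ℝ≥0∞)⁻¹ * volume (Xone δ N l k)) := by
    refine le_trans (measure_mono (cover S N hN)) ?_
    refine le_trans (measure_biUnion_finset_le _ _) ?_
    apply Finset.sum_le_sum
    intro l hl
    refine le_trans (measure_biUnion_finset_le _ _) ?_
    apply Finset.sum_le_sum
    intro k hk
    have hl1 := (Finset.mem_Icc.mp hl).1
    have hlpos : 0 < l := lt_of_lt_of_le hN hl1
    rw [volume_preimage_affine l hlpos k (Wfull S l k)]
    rw [← mul_add, ← mul_add]
    apply mul_le_mul_right
    refine le_trans (measure_mono (decompose S δ N l k)) ?_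
    refine le_trans (measure_union_le _ _) ?_
    exact add_le_add (measure_union_le _ _) le_rfl
  simp only [Finset.sum_add_distrib] at step1
  -- now step1 : μE ≤ (ΣΣ good + ΣΣ zero) + ΣΣ one
  -- Term 1 : good part
  have term1 : ∑ l ∈ Finset.Icc N (2*N), ∑ k ∈ Finset.range l,
      (l : ℝ≥0∞)⁻¹ * volume (Wgood S δ l k)
      ≤ ENNReal.ofReal (((N:ℝ)+1)/N * (s / δ)) := by
    have h1 : ∀ l ∈ Finset.Icc N (2*N), ∑ k ∈ Finset.range l,
        (l : ℝ≥0∞)⁻¹ * volume (Wgood S δ l k)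
        ≤ (N:ℝ≥0∞)⁻¹ * ((ENNReal.ofReal δ)⁻¹ * volume S) := by
      intro l hl
      obtain ⟨hl1, hl2⟩ := Finset.mem_Icc.mp hl
      rw [← Finset.mul_sum]
      have hinv : (l:ℝ≥0∞)⁻¹ ≤ (N:ℝ≥0∞)⁻¹ :=
        ENNReal.inv_le_inv' (by exact_mod_cast hl1)
      exact mul_le_mul' hinv (good_bound S hS δ hδ0 N hN hδ l hl1 hl2)
    refine le_trans (Finset.sum_le_sum h1) ?_
    rw [Finset.sum_const, Nat.card_Icc, show 2*N+1-N = N+1 from by omega, nsmul_eq_mul]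
    have heq : ((N+1:ℕ):ℝ≥0∞) * ((N:ℝ≥0∞)⁻¹ * ((ENNReal.ofReal δ)⁻¹ * volume S))
        = ENNReal.ofReal (((N:ℝ)+1) * ((N:ℝ)⁻¹ * (δ⁻¹ * s))) := by
      rw [hvolS, hNcast, hNinv, hδinv]
      rw [← ENNReal.ofReal_mul (by positivity), ← ENNReal.ofReal_mul (by positivity),
        ← ENNReal.ofReal_mul (by positivity)]
    rw [heq]
    apply ENNReal.ofReal_le_ofReal
    apply le_of_eq
    field_simp
  -- Term 2 : Xzero part
  have term2 : ∑ l ∈ Finset.Icc N (2*N), ∑ k ∈ Finset.range l,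
      (l : ℝ≥0∞)⁻¹ * volume (Xzero S δ N l k)
      ≤ ENNReal.ofReal ((M:ℝ)/N) := by
    have hXsub : ∀ l k, Xzero S δ N l k ⊆ Ico (0:ℝ) 1 := by
      intro l k x hx
      exact hx.1.1.1
    have hXeq : ∀ l k : ℕ, volume (Xzero S δ N l k)
        = ∫⁻ x in Ico (0:ℝ) 1, (Xzero S δ N l k).indicator (fun _ => (1:ℝ≥0∞)) x := by
      intro l k
      rw [lintegral_indicator (measurableSet_Xzero S hS δ N l k)]
      rw [Measure.restrict_restrict (measurableSet_Xzero S hS δ N l k)]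
      rw [setLIntegral_one, Set.inter_eq_left.mpr (hXsub l k)]
    have h1 : ∀ l ∈ Finset.Icc N (2*N), ∑ k ∈ Finset.range l,
        (l : ℝ≥0∞)⁻¹ * volume (Xzero S δ N l k)
        ≤ (N:ℝ≥0∞)⁻¹ * ∑ k ∈ Finset.range (2*N), volume (Xzero S δ N l k) := by
      intro l hl
      obtain ⟨hl1, hl2⟩ := Finset.mem_Icc.mp hl
      rw [← Finset.mul_sum]
      have hinv : (l:ℝ≥0∞)⁻¹ ≤ (N:ℝ≥0∞)⁻¹ :=
        ENNReal.inv_le_inv' (by exact_mod_cast hl1)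
      apply mul_le_mul' hinv
      exact Finset.sum_le_sum_of_subset (Finset.range_subset_range.mpr hl2)
    refine le_trans (Finset.sum_le_sum h1) ?_
    rw [← Finset.mul_sum]
    have h2 : ∑ l ∈ Finset.Icc N (2*N), ∑ k ∈ Finset.range (2*N), volume (Xzero S δ N l k)
        ≤ (M : ℝ≥0∞) := by
      have hmk : ∀ l k : ℕ, Measurable fun x =>
          (Xzero S δ N l k).indicator (fun _ => (1:ℝ≥0∞)) x :=
        fun l k => Measurable.indicator measurable_const (measurableSet_Xzero S hS δ N l k)
      have hrw : ∀ l ∈ Finset.Icc N (2*N), ∑ k ∈ Finset.range (2*N), volume (Xzero S δ N l k)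
          = ∫⁻ x in Ico (0:ℝ) 1, ∑ k ∈ Finset.range (2*N),
              (Xzero S δ N l k).indicator (fun _ => (1:ℝ≥0∞)) x := by
        intro l _
        calc ∑ k ∈ Finset.range (2*N), volume (Xzero S δ N l k)
            = ∑ k ∈ Finset.range (2*N), ∫⁻ x in Ico (0:ℝ) 1,
                (Xzero S δ N l k).indicator (fun _ => (1:ℝ≥0∞)) x :=
              Finset.sum_congr rfl (fun k _ => hXeq l k)
          _ = ∫⁻ x in Ico (0:ℝ) 1, ∑ k ∈ Finset.range (2*N),
                (Xzero S δ N l k).indicator (fun _ => (1:ℝ≥0∞)) x :=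
              (lintegral_finset_sum _ (fun k _ => hmk l k)).symm
      calc ∑ l ∈ Finset.Icc N (2*N), ∑ k ∈ Finset.range (2*N), volume (Xzero S δ N l k)
          = ∑ l ∈ Finset.Icc N (2*N), ∫⁻ x in Ico (0:ℝ) 1, ∑ k ∈ Finset.range (2*N),
              (Xzero S δ N l k).indicator (fun _ => (1:ℝ≥0∞)) x :=
            Finset.sum_congr rfl hrw
        _ = ∫⁻ x in Ico (0:ℝ) 1, ∑ l ∈ Finset.Icc N (2*N), ∑ k ∈ Finset.range (2*N),
              (Xzero S δ N l k).indicator (fun _ => (1:ℝ≥0∞)) x :=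
            (lintegral_finset_sum _ (fun l _ => Finset.measurable_sum _
              (fun k _ => hmk l k))).symm
        _ ≤ ∫⁻ _ in Ico (0:ℝ) 1, (M:ℝ≥0∞) := by
            apply setLIntegral_mono measurable_const
            intro x hx
            exact count_bound S δ M N hM hslice x hx
        _ = (M:ℝ≥0∞) := by
            rw [setLIntegral_const, Real.volume_Ico]
            norm_num
    refine le_trans (mul_le_mul' le_rfl h2) ?_
    have heq : (N:ℝ≥0∞)⁻¹ * (M:ℝ≥0∞) = ENNReal.ofReal ((N:ℝ)⁻¹ * (M:ℝ)) := by
      rw [hNinv, ← ENNReal.ofReal_natCast M, ← ENNReal.ofReal_mul (by positivity)]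
    rw [heq]
    apply ENNReal.ofReal_le_ofReal
    apply le_of_eq
    field_simp
  -- Term 3 : Xone part
  have term3 : ∑ l ∈ Finset.Icc N (2*N), ∑ k ∈ Finset.range l,
      (l : ℝ≥0∞)⁻¹ * volume (Xone δ N l k)
      ≤ ENNReal.ofReal (8*δ*(N:ℝ)^2*((N:ℝ)+1)^2) := by
    have h1 : ∀ l ∈ Finset.Icc N (2*N), ∑ k ∈ Finset.range l,
        (l : ℝ≥0∞)⁻¹ * volume (Xone δ N l k)
        ≤ (N+1:ℝ≥0∞) * ENNReal.ofReal (8*δ*N^2) := by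
      intro l hl
      obtain ⟨hl1, hl2⟩ := Finset.mem_Icc.mp hl
      have hlne : (l:ℝ≥0∞) ≠ 0 := by
        exact_mod_cast (lt_of_lt_of_le hN hl1).ne'
      have hltop : (l:ℝ≥0∞) ≠ ⊤ := ENNReal.natCast_ne_top l
      calc ∑ k ∈ Finset.range l, (l : ℝ≥0∞)⁻¹ * volume (Xone δ N l k)
          ≤ ∑ k ∈ Finset.range l, (l : ℝ≥0∞)⁻¹ *
              ((N+1:ℝ≥0∞) * ENNReal.ofReal (8*δ*N^2)) := by
            apply Finset.sum_le_sum
            intro k _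
            exact mul_le_mul' le_rfl (xone_bound δ hδ0 N hN hδ l k hl1 hl2)
        _ = (l:ℝ≥0∞) * ((l : ℝ≥0∞)⁻¹ * ((N+1:ℝ≥0∞) * ENNReal.ofReal (8*δ*N^2))) := by
            rw [Finset.sum_const, Finset.card_range, nsmul_eq_mul]
        _ = (N+1:ℝ≥0∞) * ENNReal.ofReal (8*δ*N^2) := by
            rw [← mul_assoc, ENNReal.mul_inv_cancel hlne hltop, one_mul]
    refine le_trans (Finset.sum_le_sum h1) ?_
    rw [Finset.sum_const, Nat.card_Icc, show 2*N+1-N = N+1 from by omega, nsmul_eq_mul]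
    have hNcast' : (N+1:ℝ≥0∞) = ENNReal.ofReal ((N:ℝ)+1) := by
      rw [← hNcast]
      push_cast
      ring
    have heq : ((N+1:ℕ):ℝ≥0∞) * ((N+1:ℝ≥0∞) * ENNReal.ofReal (8*δ*N^2))
        = ENNReal.ofReal (((N:ℝ)+1) * (((N:ℝ)+1) * (8*δ*N^2))) := by
      rw [hNcast, hNcast']
      rw [← ENNReal.ofReal_mul (by positivity), ← ENNReal.ofReal_mul (by positivity)]
    rw [heq]
    apply ENNReal.ofReal_le_ofReal
    apply le_of_eq
    ring
  calc volume {ω ∈ Set.Ico (0 : ℝ) 1 |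
        ∃ l : ℕ, N ≤ l ∧ l ≤ 2 * N ∧ (ω, Int.fract (l * ω)) ∈ S}
      ≤ _ := step1
    _ ≤ (ENNReal.ofReal (((N:ℝ)+1)/N * (s / δ)) + ENNReal.ofReal ((M:ℝ)/N))
          + ENNReal.ofReal (8*δ*(N:ℝ)^2*((N:ℝ)+1)^2) :=
        add_le_add (add_le_add term1 term2) term3
    _ = ENNReal.ofReal ((M : ℝ) / N) + ENNReal.ofReal (((N:ℝ)+1)/N * (s / δ))
          + ENNReal.ofReal (8*δ*(N:ℝ)^2*((N:ℝ)+1)^2) := by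
        rw [add_comm (ENNReal.ofReal (((N:ℝ)+1)/N * (s / δ)))]

end SteepLinesAux

end

noncomputable section

open MeasureTheory
open scoped ENNReal

set_option maxHeartbeats 1000000 in
/-- **Lemma on steep lines**: if every horizontal slice of a planar Borel set `S` is a
union of at most `M` intervals, then the set of `ω` for which some multiple
`(ω, ℓω mod 1)`, `N ≤ ℓ ≤ 2N`, lands in `S` has measure at most
`M/N + 8N^{5/2}|S|^{1/2}`. -/
theorem lemma_on_steep_lines
    (S : Set (ℝ × ℝ)) (hSmeas : MeasurableSet S)
    (hSsub : S ⊆ Set.Ico (0 : ℝ) 1 ×ˢ Set.Ico (0 : ℝ) 1)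
    (M : ℕ)
    (hslice : ∀ x ∈ Set.Ico (0 : ℝ) 1,
      ∃ I : Fin M → Set ℝ, (∀ i, (I i).OrdConnected) ∧
        {ω : ℝ | (ω, x) ∈ S} = ⋃ i : Fin M, I i)
    (N : ℕ) (hN : 0 < N) :
    volume {ω ∈ Set.Ico (0 : ℝ) 1 |
        ∃ l : ℕ, N ≤ l ∧ l ≤ 2 * N ∧ (ω, Int.fract (l * ω)) ∈ S}
      ≤ ENNReal.ofReal
          ((M : ℝ) / N + 8 * (N : ℝ) ^ ((5 : ℝ) / 2) * Real.sqrt (volume S).toReal) := by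
  classical
  have hNr : (0:ℝ) < N := by exact_mod_cast hN
  set s : ℝ := (volume S).toReal with hs
  have hsnn : 0 ≤ s := ENNReal.toReal_nonneg
  have hEsub : {ω ∈ Set.Ico (0:ℝ) 1 |
      ∃ l : ℕ, N ≤ l ∧ l ≤ 2*N ∧ (ω, Int.fract (l*ω)) ∈ S} ⊆ Set.Ico (0:ℝ) 1 :=
    Set.sep_subset _ _
  have hpow : ((N:ℝ)^((5:ℝ)/2))^2 = (N:ℝ)^(5:ℕ) := by
    rw [← Real.rpow_natCast ((N:ℝ)^((5:ℝ)/2)) 2, ← Real.rpow_mul (le_of_lt hNr)]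
    norm_num
  rcases Nat.eq_zero_or_pos M with hM0 | hMpos
  · -- M = 0 : the set is empty
    subst hM0
    have hE : {ω ∈ Set.Ico (0:ℝ) 1 |
        ∃ l : ℕ, N ≤ l ∧ l ≤ 2*N ∧ (ω, Int.fract (l*ω)) ∈ S} = ∅ := by
      rw [Set.eq_empty_iff_forall_notMem]
      rintro ω ⟨hω, l, hl1, hl2, hmem⟩
      have hx : Int.fract ((l:ℝ)*ω) ∈ Set.Ico (0:ℝ) 1 :=
        ⟨Int.fract_nonneg _, Int.fract_lt_one _⟩
      obtain ⟨I, _, hIu⟩ := hslice _ hx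
      have hω2 : ω ∈ {ω' : ℝ | (ω', Int.fract ((l:ℝ)*ω)) ∈ S} := hmem
      rw [hIu] at hω2
      obtain ⟨i, -⟩ := Set.mem_iUnion.mp hω2
      exact i.elim0
    rw [hE, measure_empty]
    exact zero_le
  · by_cases hMN : N ≤ M
    · -- trivial : M/N ≥ 1
      calc volume {ω ∈ Set.Ico (0:ℝ) 1 |
            ∃ l : ℕ, N ≤ l ∧ l ≤ 2*N ∧ (ω, Int.fract (l*ω)) ∈ S}
          ≤ volume (Set.Ico (0:ℝ) 1) := measure_mono hEsub
        _ = 1 := by rw [Real.volume_Ico]; norm_num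
        _ ≤ ENNReal.ofReal ((M : ℝ) / N + 8 * (N : ℝ) ^ ((5 : ℝ) / 2) * Real.sqrt s) := by
            rw [← ENNReal.ofReal_one]
            apply ENNReal.ofReal_le_ofReal
            have h1 : (1:ℝ) ≤ (M:ℝ)/N := by
              rw [le_div_iff₀ hNr]
              have : (N:ℝ) ≤ M := by exact_mod_cast hMN
              linarith
            have h2 : 0 ≤ 8 * (N:ℝ)^((5:ℝ)/2) * Real.sqrt s := by positivity
            linarith
    · by_cases hbig : 1 ≤ 64*(N:ℝ)^(5:ℕ)*s
      · -- trivial : second term ≥ 1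
        calc volume {ω ∈ Set.Ico (0:ℝ) 1 |
              ∃ l : ℕ, N ≤ l ∧ l ≤ 2*N ∧ (ω, Int.fract (l*ω)) ∈ S}
            ≤ volume (Set.Ico (0:ℝ) 1) := measure_mono hEsub
          _ = 1 := by rw [Real.volume_Ico]; norm_num
          _ ≤ ENNReal.ofReal ((M : ℝ) / N + 8 * (N : ℝ) ^ ((5 : ℝ) / 2) * Real.sqrt s) := by
              rw [← ENNReal.ofReal_one]
              apply ENNReal.ofReal_le_ofReal
              have hx0 : 0 ≤ 8*(N:ℝ)^((5:ℝ)/2)*Real.sqrt s := by positivity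
              have hxsq : (8*(N:ℝ)^((5:ℝ)/2)*Real.sqrt s)^2 = 64*(N:ℝ)^(5:ℕ)*s := by
                rw [mul_pow, mul_pow, Real.sq_sqrt hsnn, hpow]
                norm_num
              have h1 : (1:ℝ) ≤ 8*(N:ℝ)^((5:ℝ)/2)*Real.sqrt s := by
                nlinarith [hxsq, hbig, hx0]
              have h2 : 0 ≤ (M:ℝ)/N := by positivity
              linarith
      · -- main case
        have hMltN : M < N := lt_of_not_ge hMN
        have hN2 : 2 ≤ N := by omega
        have hN2r : (2:ℝ) ≤ N := by exact_mod_cast hN2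
        have hsmall : 64*(N:ℝ)^(5:ℕ)*s < 1 := lt_of_not_ge hbig
        by_cases hs0 : s = 0
        · -- zero measure : take δ → 0
          have key : ∀ d : ℝ, d ∈ Set.Ioc (0:ℝ) (1/(4*N)) →
              volume {ω ∈ Set.Ico (0:ℝ) 1 |
                ∃ l : ℕ, N ≤ l ∧ l ≤ 2*N ∧ (ω, Int.fract (l*ω)) ∈ S}
                ≤ ENNReal.ofReal ((M:ℝ)/N + 8*d*(N:ℝ)^2*((N:ℝ)+1)^2) := by
            intro d hd
            have h := SteepLinesAux.master S hSmeas hSsub M N hN hMpos hslice d hd.1 hd.2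
            rw [← hs, hs0] at h
            simp only [zero_div, mul_zero, ENNReal.ofReal_zero, add_zero] at h
            refine h.trans ?_
            have hd0' : (0:ℝ) ≤ d := hd.1.le
            rw [← ENNReal.ofReal_add (by positivity) (by positivity)]
          have hlim : Filter.Tendsto
              (fun d : ℝ => ENNReal.ofReal ((M:ℝ)/N + 8*d*(N:ℝ)^2*((N:ℝ)+1)^2))
              (nhdsWithin 0 (Set.Ioi 0)) (nhds (ENNReal.ofReal ((M:ℝ)/N))) := by
            have hc : Continuous (fun d : ℝ => (M:ℝ)/N + 8*d*(N:ℝ)^2*((N:ℝ)+1)^2) := by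
              fun_prop
            have hcont : Filter.Tendsto (fun d : ℝ => (M:ℝ)/N + 8*d*(N:ℝ)^2*((N:ℝ)+1)^2)
                (nhds 0) (nhds ((M:ℝ)/N)) := by
              have := hc.tendsto 0
              simpa using this
            exact (ENNReal.continuous_ofReal.tendsto _).comp
              (hcont.mono_left nhdsWithin_le_nhds)
          have hle : volume {ω ∈ Set.Ico (0:ℝ) 1 |
              ∃ l : ℕ, N ≤ l ∧ l ≤ 2*N ∧ (ω, Int.fract (l*ω)) ∈ S}
              ≤ ENNReal.ofReal ((M:ℝ)/N) := by
            apply ge_of_tendsto hlim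
            filter_upwards [Ioc_mem_nhdsGT (by positivity : (0:ℝ) < 1/(4*N))] with d hd
            exact key d hd
          refine hle.trans (ENNReal.ofReal_le_ofReal ?_)
          have h2 : 0 ≤ 8*(N:ℝ)^((5:ℝ)/2)*Real.sqrt s := by positivity
          linarith
        · -- positive measure : optimize δ
          have hspos : 0 < s := lt_of_le_of_ne hsnn (Ne.symm hs0)
          set aN : ℝ := ((N:ℝ)+1)/N with haN
          set CN : ℝ := 8*(N:ℝ)^2*((N:ℝ)+1)^2 with hCN
          have haN0 : 0 < aN := by positivity
          have hCN0 : 0 < CN := by positivity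
          set d : ℝ := Real.sqrt (aN * s / CN) with hd
          have hd0 : 0 < d := Real.sqrt_pos.mpr (by positivity)
          have hdsq : d^2 = aN * s / CN := Real.sq_sqrt (by positivity)
          have haN2 : aN ≤ 2 := by
            rw [haN, div_le_iff₀ hNr]
            linarith
          have hNp5 : (1:ℝ) ≤ (N:ℝ)^(5:ℕ) := by
            have h1 : (1:ℝ) ≤ N := by exact_mod_cast hN
            calc (1:ℝ) = 1^(5:ℕ) := by norm_num
              _ ≤ (N:ℝ)^(5:ℕ) := pow_le_pow_left₀ (by norm_num) h1 5
          have hs1 : s ≤ 1 := by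
            nlinarith [hsmall, hsnn, hNp5]
          have hdle : d ≤ 1/(4*N) := by
            have h1 : aN * s / CN ≤ (1/(4*N))^2 := by
              rw [div_le_iff₀ hCN0]
              have he : (1/(4*(N:ℝ)))^2 * CN = ((N:ℝ)+1)^2/2 := by
                rw [hCN]; field_simp; ring
              rw [he]
              nlinarith [haN2, hs1, hNr, haN0, hspos]
            calc d ≤ Real.sqrt ((1/(4*N))^2) := Real.sqrt_le_sqrt h1
              _ = 1/(4*N) := Real.sqrt_sq (by positivity)
          have hmaster := SteepLinesAux.master S hSmeas hSsub M N hN hMpos hslice d hd0 hdle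
          rw [← hs] at hmaster
          refine le_trans hmaster ?_
          rw [← ENNReal.ofReal_add (by positivity) (by positivity),
            ← ENNReal.ofReal_add (by positivity) (by positivity)]
          apply ENNReal.ofReal_le_ofReal
          -- key real inequality
          have hCd : CN * d^2 = aN * s := by
            rw [hdsq]
            field_simp
          have h1 : aN * (s / d) = CN * d := by
            rw [pow_two] at hCd
            field_simp
            nlinarith [hCd]
          have hx0 : 0 ≤ 8*(N:ℝ)^((5:ℝ)/2)*Real.sqrt s := by positivity
          have hxsq : (8*(N:ℝ)^((5:ℝ)/2)*Real.sqrt s)^2 = 64*(N:ℝ)^(5:ℕ)*s := by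
            rw [mul_pow, mul_pow, Real.sq_sqrt hsnn, hpow]
            norm_num
          have hCNaN : CN * aN ≤ 16*(N:ℝ)^(5:ℕ) := by
            have e0 : (0:ℝ) ≤ (N:ℝ)+1 := by linarith
            have e1 : (N:ℝ)+1 ≤ (3/2)*N := by linarith
            have e2 : ((N:ℝ)+1)^3 ≤ ((3/2)*N)^3 := by
              apply pow_le_pow_left₀ e0 e1
            have e3 : CN * aN = 8*(N:ℝ)*((N:ℝ)+1)^3 := by
              rw [hCN, haN]
              field_simp
            rw [e3]
            nlinarith [pow_pos hNr 3, hN2r, e2]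
          have hsq2 : (2*(CN*d))^2 ≤ (8*(N:ℝ)^((5:ℝ)/2)*Real.sqrt s)^2 := by
            rw [hxsq]
            have : (2*(CN*d))^2 = 4*CN*(CN*d^2) := by ring
            rw [this, hCd]
            nlinarith [hCNaN, hspos, haN0, hCN0]
          have h2 : 2*(CN*d) ≤ 8*(N:ℝ)^((5:ℝ)/2)*Real.sqrt s := by
            have hl0 : 0 ≤ 2*(CN*d) := by positivity
            nlinarith [hsq2, hx0, hl0]
          have hterm : aN * (s/d) + 8*d*(N:ℝ)^2*((N:ℝ)+1)^2 = 2*(CN*d) := by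
            rw [h1, hCN]
            ring
          have : ((N:ℝ)+1)/N * (s/d) + 8*d*(N:ℝ)^2*((N:ℝ)+1)^2
              ≤ 8*(N:ℝ)^((5:ℝ)/2)*Real.sqrt s := by
            rw [← haN, hterm]
            exact h2
          linarith

end
end
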